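/- arXiv:1603.07809 — 7 statements merged into one kernel-verified Lean document; each statement's English description precedes it below -/
import Mathlib

section
/- Let t, k, v, N be integers with k ≥ t ≥ 2, v ≥ 2 and N ≥ 1. If C(k,t)·v^t·(1 − 1/v^t)^N < 1, then a covering array CA(N;t,k,v) exists; in particular CAN(t,k,v) ≤ N. -/
/-- An `N × k` array `A` over alphabet `Fin v` covers the `t`-way interaction
given by distinct columns `c` and values `a` if some row agrees with `a` on `c`. -/
def Covers {N k v t : ℕ} (A : Fin N → Fin k → Fin v)
    (c : Fin t → Fin k) (a : Fin t → Fin v) : Prop :=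
  ∃ r : Fin N, ∀ i : Fin t, A r (c i) = a i

/-- `A` is a covering array `CA(N; t, k, v)`: every `t`-way interaction is covered. -/
def IsCoveringArray (N t k v : ℕ) (A : Fin N → Fin k → Fin v) : Prop :=
  ∀ c : Fin t → Fin k, Function.Injective c → ∀ a : Fin t → Fin v, Covers A c a

/-- The covering array number `CAN(t, k, v)`: the least `N` admitting a `CA(N; t, k, v)`. -/
noncomputable def CAN (t k v : ℕ) : ℕ :=
  sInf {N : ℕ | ∃ A : Fin N → Fin k → Fin v, IsCoveringArray N t k v A}

/-!
Union bound: a fixed `t`-way interaction on the column set `S` is matched by exactly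
`v ^ (k - t)` of the `v ^ k` possible rows, so it is missed by exactly
`(v ^ k - v ^ (k - t)) ^ N` of the `(v ^ k) ^ N` arrays with `N` rows. There are
`C(k, t) · v ^ t` interactions, so when `C(k, t) · v ^ t · (1 - 1 / v ^ t) ^ N < 1` the arrays
missing some interaction cannot exhaust all arrays.
-/

open Finset

theorem Finset.exists_forall_notMem_of_sum_card_lt {β γ : Type*} [Fintype β] (s : Finset γ)
    (B : γ → Finset β) (h : ∑ i ∈ s, #(B i) < Fintype.card β) : ∃ b, ∀ i ∈ s, b ∉ B i := by
  classical
  by_contra! hcover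
  have hsub : (univ : Finset β) ⊆ s.biUnion B := fun b _ => by simpa using hcover b
  have := (card_le_card hsub).trans card_biUnion_le
  rw [card_univ] at this
  omega

section Counting

variable {ι α : Type*} [Fintype ι] [DecidableEq ι] [Fintype α]

def rowsAgreeingOn (S : Finset ι) (g : ι → α) : Finset (ι → α) :=
  Fintype.piFinset fun j => if j ∈ S then {g j} else univ

theorem mem_rowsAgreeingOn {S : Finset ι} {g r : ι → α} :
    r ∈ rowsAgreeingOn S g ↔ ∀ j ∈ S, r j = g j := by
  simp only [rowsAgreeingOn, Fintype.mem_piFinset]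
  refine forall_congr' fun j => ?_
  split_ifs <;> simp [*]

theorem card_rowsAgreeingOn (S : Finset ι) (g : ι → α) :
    #(rowsAgreeingOn S g) = Fintype.card α ^ (Fintype.card ι - #S) := by
  simp only [rowsAgreeingOn, Fintype.card_piFinset, apply_ite card, card_singleton, card_univ,
    prod_ite, prod_const_one, one_mul, prod_const, filter_not, filter_univ_mem,
    card_univ_sdiff]

/-- One representative of each assignment on `S`. -/
def constOff (z : α) (S : Finset ι) : Finset (ι → α) :=
  Fintype.piFinset fun j => if j ∈ S then univ else {z}

theorem card_constOff (z : α) (S : Finset ι) : #(constOff z S) = Fintype.card α ^ #S := by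
  simp only [constOff, Fintype.card_piFinset, apply_ite card, card_singleton, card_univ,
    prod_ite, prod_const_one, mul_one, prod_const, filter_univ_mem]

def arraysMissing [DecidableEq α] (ρ : Type*) [Fintype ρ] [DecidableEq ρ] (S : Finset ι)
    (g : ι → α) : Finset (ρ → ι → α) :=
  Fintype.piFinset fun _ => (rowsAgreeingOn S g)ᶜ

theorem card_arraysMissing [DecidableEq α] (ρ : Type*) [Fintype ρ] [DecidableEq ρ]
    (S : Finset ι) (g : ι → α) :
    #(arraysMissing ρ S g) = (Fintype.card α ^ Fintype.card ι -
      Fintype.card α ^ (Fintype.card ι - #S)) ^ Fintype.card ρ := by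
  simp [arraysMissing, Fintype.card_piFinset, card_compl, card_rowsAgreeingOn]

end Counting

theorem isCoveringArray_of_forall_notMem_arraysMissing {N t k v : ℕ} (z : Fin v)
    (A : Fin N → Fin k → Fin v)
    (hA : ∀ S ∈ powersetCard t (univ : Finset (Fin k)), ∀ g ∈ constOff z S,
      A ∉ arraysMissing (Fin N) S g) :
    IsCoveringArray N t k v A := by
  intro c hc a
  let g : Fin k → Fin v := Function.extend c a fun _ => z
  have hg : g ∈ constOff z (univ.image c) := by
    simp only [constOff, Fintype.mem_piFinset]
    intro j
    split_ifs with hj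
    · exact mem_univ _
    · refine mem_singleton.2 (Function.extend_apply' _ _ _ ?_)
      simpa using hj
  have hS : univ.image c ∈ powersetCard t (univ : Finset (Fin k)) := by
    simp [mem_powersetCard, card_image_of_injective _ hc]
  obtain ⟨r, hr⟩ : ∃ r, A r ∈ rowsAgreeingOn (univ.image c) g := by
    simpa [arraysMissing] using hA _ hS g hg
  refine ⟨r, fun i => ?_⟩
  exact (mem_rowsAgreeingOn.1 hr (c i) (mem_image_of_mem c (mem_univ i))).trans
    (hc.extend_apply a _ i)

theorem exists_isCoveringArray_of_card_lt {N t k v : ℕ} (hv : 0 < v)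
    (h : k.choose t * (v ^ t * (v ^ k - v ^ (k - t)) ^ N) < (v ^ k) ^ N) :
    ∃ A : Fin N → Fin k → Fin v, IsCoveringArray N t k v A := by
  let z : Fin v := ⟨0, hv⟩
  let interactions := (powersetCard t (univ : Finset (Fin k))).sigma (constOff z)
  have hcount : ∀ S ∈ powersetCard t (univ : Finset (Fin k)),
      ∑ g ∈ constOff z S, #(arraysMissing (Fin N) S g) = v ^ t * (v ^ k - v ^ (k - t)) ^ N := by
    intro S hS
    rw [← mem_powersetCard_univ.1 hS]
    simp [card_arraysMissing, card_constOff]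
  have hbound : ∑ Sg ∈ interactions, #(arraysMissing (Fin N) Sg.1 Sg.2) <
      Fintype.card (Fin N → Fin k → Fin v) := by
    rw [sum_sigma, sum_congr rfl hcount, sum_const, card_powersetCard]
    simpa using h
  obtain ⟨A, hA⟩ := exists_forall_notMem_of_sum_card_lt interactions _ hbound
  exact ⟨A, isCoveringArray_of_forall_notMem_arraysMissing z A
    fun S hS g hg => hA ⟨S, g⟩ (mem_sigma.2 ⟨hS, hg⟩)⟩

theorem choose_mul_pow_mul_sub_pow_lt_of_lt_one {N t k v : ℕ} (hv : 0 < v) (hk : t ≤ k)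
    (h : (k.choose t : ℝ) * (v : ℝ) ^ t * (1 - 1 / (v : ℝ) ^ t) ^ N < 1) :
    k.choose t * (v ^ t * (v ^ k - v ^ (k - t)) ^ N) < (v ^ k) ^ N := by
  have hmissed : ((v ^ k - v ^ (k - t) : ℕ) : ℝ) = (v : ℝ) ^ k * (1 - 1 / (v : ℝ) ^ t) := by
    have hsplit : (v : ℝ) ^ k = (v : ℝ) ^ (k - t) * (v : ℝ) ^ t := by
      rw [← pow_add, Nat.sub_add_cancel hk]
    rw [Nat.cast_sub (Nat.pow_le_pow_right hv (Nat.sub_le k t))]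
    push_cast
    rw [hsplit]
    field_simp
  have hpos : (0 : ℝ) < ((v : ℝ) ^ k) ^ N := by positivity
  suffices (k.choose t : ℝ) * ((v : ℝ) ^ t * ((v ^ k - v ^ (k - t) : ℕ) : ℝ) ^ N) <
      ((v : ℝ) ^ k) ^ N by
    exact_mod_cast this
  calc (k.choose t : ℝ) * ((v : ℝ) ^ t * ((v ^ k - v ^ (k - t) : ℕ) : ℝ) ^ N)
      = (k.choose t : ℝ) * (v : ℝ) ^ t * (1 - 1 / (v : ℝ) ^ t) ^ N * ((v : ℝ) ^ k) ^ N := by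
        rw [hmissed, mul_pow]; ring
    _ < ((v : ℝ) ^ k) ^ N := mul_lt_of_lt_one_left hpos h

theorem slj_finite_general (t k v N : ℕ) (hk : t ≤ k) (hv : 2 ≤ v)
    (h : (Nat.choose k t : ℝ) * (v : ℝ) ^ t * (1 - 1 / (v : ℝ) ^ t) ^ N < 1) :
    (∃ A : Fin N → Fin k → Fin v, IsCoveringArray N t k v A) ∧ CAN t k v ≤ N := by
  have hv0 : 0 < v := by omega
  obtain ⟨A, hA⟩ :=
    exists_isCoveringArray_of_card_lt hv0 (choose_mul_pow_mul_sub_pow_lt_of_lt_one hv0 hk h)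
  exact ⟨⟨A, hA⟩, Nat.sInf_le ⟨A, hA⟩⟩

theorem slj_finite (t k v N : ℕ) (ht : 2 ≤ t) (hk : t ≤ k) (hv : 2 ≤ v) (hN : 1 ≤ N)
    (h : (Nat.choose k t : ℝ) * (v : ℝ) ^ t * (1 - 1 / (v : ℝ) ^ t) ^ N < 1) :
    (∃ A : Fin N → Fin k → Fin v, IsCoveringArray N t k v A) ∧ CAN t k v ≤ N :=
  slj_finite_general t k v N hk hv h
end

section
/- (Stein–Lovász–Johnson bound) Let t, v be fixed integers with t ≥ 2 and v ≥ 2. Then d(t,v) = limsup_{k→∞} CAN(t,k,v)/log k ≤ t / log(v^t/(v^t − 1)). -/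
/-!
A uniformly random `N × k` array misses a fixed `t`-way interaction with probability
`(1 - v⁻ᵗ) ^ N`, and there are at most `kᵗ vᵗ` interactions, so by the union bound a covering
array exists once `kᵗ vᵗ (vᵗ - 1) ^ N < vᵗᴺ`. The least such `N` is
`t log (k v) / log (vᵗ / (vᵗ - 1)) + O(1)`, and `log (k v) / log k → 1`.
-/

open Finset Filter Topology

theorem card_filter_forall_comp_eq {k t v : ℕ} {c : Fin t → Fin k} (hc : Function.Injective c)
    (a : Fin t → Fin v) :
    #{row : Fin k → Fin v | ∀ i, row (c i) = a i} = v ^ (k - t) := by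
  set S : Fin k → Finset (Fin v) := fun x => {b | ∀ i, c i = x → b = a i}
  have hS : ({row | ∀ i, row (c i) = a i} : Finset (Fin k → Fin v)) = Fintype.piFinset S := by
    ext row
    simpa [S] using ⟨fun h x i hi => hi ▸ h i, fun h i => h _ i rfl⟩
  have hcard : ∀ x, #(S x) = if x ∈ Set.range c then 1 else v := by
    intro x
    split_ifs with hx
    · obtain ⟨j, rfl⟩ := hx
      rw [card_eq_one]
      exact ⟨a j, by ext b; simp [S, hc.eq_iff]⟩
    · have : S x = univ := by
        ext b; simp only [S, mem_filter, mem_univ, true_and, iff_true]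
        exact fun i hi => absurd ⟨i, hi⟩ hx
      simp [this]
  rw [hS, Fintype.card_piFinset, prod_congr rfl fun x _ => hcard x, prod_ite, prod_const_one,
    one_mul, prod_const, filter_not, card_sdiff]
  simp [card_image_of_injective _ hc]

theorem card_filter_not_forall_comp_eq {k t v : ℕ} {c : Fin t → Fin k}
    (hc : Function.Injective c) (a : Fin t → Fin v) :
    #{row : Fin k → Fin v | ¬∀ i, row (c i) = a i} = v ^ (k - t) * (v ^ t - 1) := by
  have htk : t ≤ k := by simpa using Fintype.card_le_of_injective c hc
  rw [filter_not, card_sdiff_of_subset (filter_subset _ _), card_filter_forall_comp_eq hc,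
    card_univ, Fintype.card_fun, Fintype.card_fin, Fintype.card_fin, Nat.mul_sub_one,
    ← pow_add, Nat.sub_add_cancel htk]

open Classical in
theorem card_filter_not_covers {N k v t : ℕ} {c : Fin t → Fin k} (hc : Function.Injective c)
    (a : Fin t → Fin v) :
    #{A : Fin N → Fin k → Fin v | ¬Covers A c a} = (v ^ (k - t) * (v ^ t - 1)) ^ N := by
  have : ({A | ¬Covers A c a} : Finset (Fin N → Fin k → Fin v)) =
      Fintype.piFinset fun _ => {row | ¬∀ i, row (c i) = a i} := by
    ext A
    simp [Covers]
  rw [this, Fintype.card_piFinset, prod_const, card_univ, Fintype.card_fin,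
    card_filter_not_forall_comp_eq hc]

theorem exists_isCoveringArray_of_lt {N t k v : ℕ} (htk : t ≤ k) (hv : 0 < v)
    (h : k ^ t * v ^ t * (v ^ t - 1) ^ N < v ^ (t * N)) :
    ∃ A : Fin N → Fin k → Fin v, IsCoveringArray N t k v A := by
  classical
  by_contra hno
  simp only [IsCoveringArray, not_exists, not_forall] at hno
  set pairs := ({p | Function.Injective p.1} : Finset ((Fin t → Fin k) × (Fin t → Fin v)))
  have hcover : (univ : Finset (Fin N → Fin k → Fin v)) ⊆
      pairs.biUnion fun p => {A | ¬Covers A p.1 p.2} := by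
    intro A _
    obtain ⟨c, hc, a, hA⟩ := hno A
    simp only [mem_biUnion]
    exact ⟨(c, a), by simpa [pairs] using hc, by simpa using hA⟩
  have hcount : v ^ (k * N) ≤ v ^ ((k - t) * N) * (k ^ t * v ^ t * (v ^ t - 1) ^ N) :=
    calc v ^ (k * N) = #(univ : Finset (Fin N → Fin k → Fin v)) := by simp [pow_mul]
      _ ≤ #pairs * (v ^ (k - t) * (v ^ t - 1)) ^ N :=
        (card_le_card hcover).trans <| card_biUnion_le_card_mul _ _ _ fun p hp =>
          (card_filter_not_covers (by simpa [pairs] using hp) p.2).le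
      _ ≤ k ^ t * v ^ t * (v ^ (k - t) * (v ^ t - 1)) ^ N := by
        gcongr
        exact (card_le_univ _).trans (by simp)
      _ = v ^ ((k - t) * N) * (k ^ t * v ^ t * (v ^ t - 1) ^ N) := by
        rw [mul_pow, ← pow_mul]; ring
  rw [show k * N = (k - t) * N + t * N by rw [← add_mul, Nat.sub_add_cancel htk], pow_add]
    at hcount
  exact absurd hcount (not_le.2 (Nat.mul_lt_mul_of_pos_left h (by positivity)))

theorem exists_mul_pow_lt_pow {M q : ℕ} (hM : 0 < M) (hq : 2 ≤ q) :
    ∃ N : ℕ, M * (q - 1) ^ N < q ^ N ∧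
      (N : ℝ) ≤ Real.log M / Real.log ((q : ℝ) / (q - 1)) + 1 := by
  set L := Real.log ((q : ℝ) / (q - 1))
  have hq' : (2 : ℝ) ≤ q := by exact_mod_cast hq
  have hq1 : (0 : ℝ) < q - 1 := by linarith
  have hL : 0 < L := Real.log_pos <| (one_lt_div hq1).2 (by linarith)
  refine ⟨⌊Real.log M / L⌋₊ + 1, ?_, ?_⟩
  · have hN : Real.log M < ((⌊Real.log M / L⌋₊ + 1 : ℕ) : ℝ) * L := by
      rw [← div_lt_iff₀ hL]
      push_cast
      exact Nat.lt_floor_add_one _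
    rw [← Real.log_pow, Real.log_lt_log_iff (by exact_mod_cast hM) (by positivity), div_pow,
      lt_div_iff₀ (by positivity)] at hN
    rw [← Nat.cast_lt (α := ℝ)]
    push_cast [Nat.one_le_of_lt hq]
    exact hN
  · push_cast
    linarith [Nat.floor_le (div_nonneg (Real.log_natCast_nonneg M) hL.le)]

theorem cast_CAN_le {t k v : ℕ} (ht : t ≠ 0) (hv : 2 ≤ v) (htk : t ≤ k) :
    (CAN t k v : ℝ) ≤
      t * Real.log (k * v) / Real.log ((v : ℝ) ^ t / ((v : ℝ) ^ t - 1)) + 1 := by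
  have hk : 0 < k := by omega
  obtain ⟨N, hcount, hN⟩ := exists_mul_pow_lt_pow (M := k ^ t * v ^ t) (q := v ^ t)
    (by positivity) (hv.trans (Nat.le_self_pow ht v))
  have hCAN : CAN t k v ≤ N :=
    Nat.sInf_le (exists_isCoveringArray_of_lt htk (by omega) (by rwa [pow_mul]))
  calc (CAN t k v : ℝ) ≤ N := by exact_mod_cast hCAN
    _ ≤ _ := by simpa [← mul_pow, Real.log_pow] using hN

theorem slj_asymptotic (t v : ℕ) (ht : 2 ≤ t) (hv : 2 ≤ v) :
    Filter.limsup (fun k : ℕ => (CAN t k v : ℝ) / Real.log k) Filter.atTop ≤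
      (t : ℝ) / Real.log ((v : ℝ) ^ t / ((v : ℝ) ^ t - 1)) := by
  set L := Real.log ((v : ℝ) ^ t / ((v : ℝ) ^ t - 1))
  set C := t * Real.log v / L + 1
  have hlog : Tendsto (fun k : ℕ => Real.log k) atTop atTop :=
    Real.tendsto_log_atTop.comp tendsto_natCast_atTop_atTop
  have hbound : ∀ᶠ k : ℕ in atTop, (CAN t k v : ℝ) / Real.log k ≤ t / L + C / Real.log k := by
    filter_upwards [eventually_ge_atTop t, hlog.eventually_gt_atTop 0] with k htk hk
    have hk0 : (k : ℝ) ≠ 0 := Nat.cast_ne_zero.2 (by omega)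
    rw [div_le_iff₀ hk, add_mul, div_mul_cancel₀ _ hk.ne']
    calc (CAN t k v : ℝ) ≤ t * Real.log (k * v) / L + 1 := cast_CAN_le (by omega) hv htk
      _ = _ := by rw [Real.log_mul hk0 (by positivity)]; ring
  have hlim : Tendsto (fun k : ℕ => t / L + C / Real.log k) atTop (𝓝 (t / L)) := by
    simpa using tendsto_const_nhds.add (tendsto_const_nhds.div_atTop hlog)
  calc limsup (fun k : ℕ => (CAN t k v : ℝ) / Real.log k) atTop
      ≤ limsup (fun k : ℕ => t / L + C / Real.log k) atTop :=
        limsup_le_limsup hbound (isCoboundedUnder_le_of_eventually_le _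
          (.of_forall fun k => div_nonneg (Nat.cast_nonneg _) (Real.log_natCast_nonneg k)))
          hlim.isBoundedUnder_le
    _ = t / L := hlim.limsup_eq
end

section
/- (Discrete SLJ lower bound) Let t, k, v be integers with k ≥ t ≥ 2, v ≥ 2, and set y = 1 − 1/v^t. Define a sequence r by r(0) = C(k,t)·v^t and, for i ≥ 1, r(i) = ⌊y·r(i−1)⌋ if i = 1 or v^t does not divide r(i−1), and r(i) = y·r(i−1) − 1 if i > 1 and v^t divides r(i−1). If n is an index with r(n) = 0 and r(i) > 0 for all i < n, then n > log(C(k,t) + 1) / log(v^t/(v^t − 1)). -/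
/-- The discrete Stein-Lovász-Johnson sequence: `r 0 = C(k,t) v^t`, and `r (i+1)`
is `⌊y ⬝ r i⌋` when `i + 1 = 1` or `v^t` does not divide `r i`, and `y ⬝ r i - 1`
(which equals `⌊y ⬝ r i⌋ - 1` since `y ⬝ r i` is then an integer) otherwise,
where `y = 1 - 1/v^t`. -/
def rSeq (t v k : ℕ) : ℕ → ℤ
  | 0 => (Nat.choose k t : ℤ) * (v : ℤ) ^ t
  | (i + 1) =>
    if i + 1 = 1 ∨ ¬ ((v : ℤ) ^ t ∣ rSeq t v k i) then
      ⌊(1 - 1 / (v : ℚ) ^ t) * (rSeq t v k i : ℚ)⌋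
    else ⌊(1 - 1 / (v : ℚ) ^ t) * (rSeq t v k i : ℚ)⌋ - 1

/- Proof idea: every step of the recursion loses at most `1` against multiplication by
`y = 1 - 1/v^t`, and since `y ⬝ v^t = v^t - 1` the shifted sequence `r i + v^t` decays at most
geometrically with ratio `y`. Starting from `r 1 + v^t = C(k,t) (v^t - 1) + v^t`, the value
`r n = 0` forces `(C(k,t) + 1) yⁿ < 1`; taking logarithms gives the bound. -/

theorem pow_mul_add_le_add_of_sub_one_le {R : Type*} [Ring R] [PartialOrder R] [IsOrderedRing R]
    {y c : R} (hy : 0 ≤ y) (hc : y * c = c - 1) {r : ℕ → R}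
    (hr : ∀ i, y * r i - 1 ≤ r (i + 1)) (i : ℕ) : y ^ i * (r 0 + c) ≤ r i + c := by
  induction i with
  | zero => simp
  | succ i ih =>
    calc y ^ (i + 1) * (r 0 + c) = y * (y ^ i * (r 0 + c)) := by rw [pow_succ', mul_assoc]
      _ ≤ y * (r i + c) := mul_le_mul_of_nonneg_left ih hy
      _ = y * r i - 1 + c := by rw [mul_add, hc]; abel
      _ ≤ r (i + 1) + c := by gcongr; exact hr i

theorem Real.log_div_log_lt_of_lt_pow {a b : ℝ} (ha : 0 < a) (hb : 1 < b) {n : ℕ}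
    (h : a < b ^ n) : Real.log a / Real.log b < n := by
  rw [div_lt_iff₀ (Real.log_pos hb), ← Real.log_pow]
  exact Real.log_lt_log ha h

theorem add_one_lt_pow_of_pow_mul_le {V C : ℝ} (hV : 1 < V) {m : ℕ}
    (h : (1 - 1 / V) ^ m * (C * (V - 1) + V) ≤ V) : C + 1 < (V / (V - 1)) ^ (m + 1) := by
  have hy : 1 - 1 / V = (V / (V - 1))⁻¹ := by
    field_simp [(by linarith : V - 1 ≠ 0)]
  have hpos : 0 < (1 - 1 / V) ^ m := pow_pos (by rw [hy]; positivity) m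
  have hlt : (C + 1) * (1 - 1 / V) ^ (m + 1) * V < V := by
    calc (C + 1) * (1 - 1 / V) ^ (m + 1) * V
        = (1 - 1 / V) ^ m * ((C + 1) * ((1 - 1 / V) * V)) := by ring
      _ = (1 - 1 / V) ^ m * (C * (V - 1) + V) - (1 - 1 / V) ^ m := by
          rw [sub_mul, div_mul_cancel₀ _ (by positivity)]
          ring
      _ < V := by linarith
  have hlt' : (C + 1) * (1 - 1 / V) ^ (m + 1) < 1 :=
    (mul_lt_iff_lt_one_left (by linarith)).mp hlt
  rwa [hy, inv_pow, mul_inv_lt_iff₀ (by positivity), one_mul] at hlt'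

namespace rSeq

variable {t v k : ℕ}

theorem zero_ne_zero (hk : t ≤ k) (hv : v ≠ 0) : rSeq t v k 0 ≠ 0 := by
  rw [rSeq]
  have := Nat.choose_pos hk
  positivity

theorem one_eq (hv : v ≠ 0) : rSeq t v k 1 = (Nat.choose k t : ℤ) * ((v : ℤ) ^ t - 1) := by
  rw [rSeq, if_pos (Or.inl rfl), rSeq, ← Int.floor_intCast (R := ℚ) (_ * (_ - 1))]
  congr 1
  push_cast
  field_simp

theorem sub_one_le_succ (hv : v ≠ 0) (i : ℕ) :
    (1 - 1 / (v : ℝ) ^ t) * (rSeq t v k i : ℝ) - 1 ≤ (rSeq t v k (i + 1) : ℝ) := by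
  suffices h : (1 - 1 / (v : ℚ) ^ t) * (rSeq t v k i : ℚ) - 1 ≤ (rSeq t v k (i + 1) : ℚ) by
    simpa using (Rat.cast_le (K := ℝ)).mpr h
  rw [rSeq]
  split_ifs with h
  · linarith [Int.sub_one_lt_floor ((1 - 1 / (v : ℚ) ^ t) * (rSeq t v k i : ℚ))]
  · obtain ⟨c, hc⟩ := not_or.mp h |>.2 |> not_not.mp
    have hexact : (1 - 1 / (v : ℚ) ^ t) * (rSeq t v k i : ℚ) = (((v : ℤ) ^ t * c - c : ℤ) : ℚ) := by
      rw [hc]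
      push_cast
      field_simp
    rw [hexact, Int.floor_intCast]
    push_cast
    linarith

end rSeq

theorem discrete_slj_lower_general (t k v n : ℕ) (ht : 2 ≤ t) (hk : t ≤ k) (hv : 2 ≤ v)
    (hn : rSeq t v k n = 0) :
    Real.log ((Nat.choose k t : ℝ) + 1) /
        Real.log ((v : ℝ) ^ t / ((v : ℝ) ^ t - 1)) < (n : ℝ) := by
  have hv0 : v ≠ 0 := by omega
  obtain ⟨m, rfl⟩ : ∃ m, n = m + 1 :=
    Nat.exists_eq_succ_of_ne_zero (by rintro rfl; exact rSeq.zero_ne_zero hk hv0 hn)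
  have hV : (1 : ℝ) < (v : ℝ) ^ t := one_lt_pow₀ (by exact_mod_cast hv) (by omega)
  have hy : (0 : ℝ) ≤ 1 - 1 / (v : ℝ) ^ t := by
    rw [sub_nonneg]; exact div_le_one_of_le₀ hV.le (by positivity)
  have hc : (1 - 1 / (v : ℝ) ^ t) * (v : ℝ) ^ t = (v : ℝ) ^ t - 1 := by field_simp
  have hdecay := pow_mul_add_le_add_of_sub_one_le hy hc
    (r := fun i ↦ (rSeq t v k (i + 1) : ℝ)) (fun i ↦ rSeq.sub_one_le_succ hv0 (i + 1)) m
  simp only [rSeq.one_eq hv0, hn] at hdecay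
  push_cast at hdecay
  exact Real.log_div_log_lt_of_lt_pow (by positivity) ((one_lt_div (by linarith)).mpr (by linarith))
    (add_one_lt_pow_of_pow_mul_le hV (by linarith))

theorem discrete_slj_lower (t k v n : ℕ) (ht : 2 ≤ t) (hk : t ≤ k) (hv : 2 ≤ v)
    (hn : rSeq t v k n = 0) (hpos : ∀ i < n, 0 < rSeq t v k i) :
    Real.log ((Nat.choose k t : ℝ) + 1) /
        Real.log ((v : ℝ) ^ t / ((v : ℝ) ^ t - 1)) < (n : ℝ) :=
  discrete_slj_lower_general t k v n ht hk hv hn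
end

section
/- (Finite Lovász local lemma bound) Let t, k, v, N be integers with k ≥ 2t, t ≥ 2, v ≥ 2 and N ≥ 1. If e·(1 − 1/v^t)^N·v^t·t·C(k,t−1) ≤ 1, then a covering array CA(N;t,k,v) exists; in particular CAN(t,k,v) ≤ N. (Here e is Euler's number.) -/
open Finset

lemma inv_exp_mul_le_inv_succ_mul_pow (D : ℕ) (hD : 0 < D) :
    (Real.exp 1 * D)⁻¹ ≤ (D + 1 : ℝ)⁻¹ * (1 - (D + 1 : ℝ)⁻¹) ^ (D - 1) := by
  have hD' : (0 : ℝ) < D := by exact_mod_cast hD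
  have hy : 1 - (D + 1 : ℝ)⁻¹ = D / (D + 1) := by field_simp; ring
  have hpow : (Real.exp 1)⁻¹ ≤ (D / (D + 1) : ℝ) ^ D := by
    rw [inv_le_comm₀ (Real.exp_pos 1) (by positivity), ← inv_pow, inv_div, add_div,
      div_self hD'.ne', add_comm, one_div]
    simpa only [add_comm] using Real.one_add_inv_pow_le_exp (n := D)
  have hrhs : (D + 1 : ℝ)⁻¹ * (D / (D + 1) : ℝ) ^ (D - 1) = (D / (D + 1) : ℝ) ^ D / D := by
    rw [← Nat.sub_add_cancel hD, pow_succ, Nat.sub_add_cancel hD]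
    field_simp
  rw [hy, hrhs, mul_inv, div_eq_mul_inv]
  exact mul_le_mul_of_nonneg_right hpow (by positivity)

section LovaszLocalLemma

variable {Ω ι : Type*} [Fintype Ω] [DecidableEq Ω] (A : ι → Finset Ω)

def avoiding (S : Finset ι) : Finset Ω := univ \ S.biUnion A

lemma avoiding_anti : Antitone (avoiding A) := fun _ _ h =>
  sdiff_subset_sdiff subset_rfl (biUnion_subset_biUnion_of_subset_left A h)

variable [DecidableEq ι]

lemma avoiding_insert (j : ι) (S : Finset ι) :
    avoiding A (insert j S) = avoiding A S \ A j := by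
  rw [avoiding, avoiding, biUnion_insert, sdiff_sdiff_left, sup_eq_union, union_comm]

lemma card_avoiding_insert (j : ι) (S : Finset ι) :
    #(avoiding A (insert j S)) + #(A j ∩ avoiding A S) = #(avoiding A S) := by
  rw [avoiding_insert, inter_comm, card_sdiff_add_card_inter]

variable {A} (x : ι → ℝ)

lemma one_sub_mul_card_avoiding_le {j : ι} {S : Finset ι}
    (h : (#(A j ∩ avoiding A S) : ℝ) ≤ x j * #(avoiding A S)) :
    (1 - x j) * #(avoiding A S) ≤ #(avoiding A (insert j S)) := by
  have hsplit : (#(avoiding A (insert j S)) : ℝ) + #(A j ∩ avoiding A S) = #(avoiding A S) := by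
    exact_mod_cast card_avoiding_insert A j S
  linarith

lemma prod_one_sub_mul_card_avoiding_le (hx : ∀ j, x j ≤ 1) (U T : Finset ι)
    (hUT : Disjoint U T)
    (hbound : ∀ V ⊂ U ∪ T, ∀ j ∈ T, j ∉ V →
      (#(A j ∩ avoiding A V) : ℝ) ≤ x j * #(avoiding A V)) :
    (∏ j ∈ T, (1 - x j)) * #(avoiding A U) ≤ #(avoiding A (U ∪ T)) := by
  induction T using Finset.induction_on with
  | empty => simp
  | @insert j T hjT ih =>
    have hjU : j ∉ U ∪ T := by
      simp only [mem_union, not_or]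
      exact ⟨disjoint_right.mp hUT (mem_insert_self j T), hjT⟩
    have hsub : U ∪ T ⊂ U ∪ insert j T := by
      rw [union_insert]; exact ssubset_insert hjU
    have ih' := ih (disjoint_of_subset_right (subset_insert j T) hUT)
      fun V hV i hi => hbound V (hV.trans hsub) i (mem_insert_of_mem hi)
    rw [prod_insert hjT, union_insert, mul_assoc]
    calc (1 - x j) * ((∏ i ∈ T, (1 - x i)) * #(avoiding A U))
        ≤ (1 - x j) * #(avoiding A (U ∪ T)) :=
          mul_le_mul_of_nonneg_left ih' (sub_nonneg.mpr (hx j))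
      _ ≤ _ := one_sub_mul_card_avoiding_le x
          (hbound _ hsub j (mem_insert_self j T) hjU)

variable [Nonempty Ω] {Γ : ι → Finset ι}

theorem card_inter_avoiding_le (hx0 : ∀ i, 0 ≤ x i) (hx1 : ∀ i, x i ≤ 1)
    (hA : ∀ i, (#(A i) : ℝ) ≤ x i * (∏ j ∈ (Γ i).erase i, (1 - x j)) * Fintype.card Ω)
    (hind : ∀ i S, Disjoint S (Γ i) →
      #(A i ∩ avoiding A S) * Fintype.card Ω = #(A i) * #(avoiding A S))
    (S : Finset ι) : ∀ i ∉ S, (#(A i ∩ avoiding A S) : ℝ) ≤ x i * #(avoiding A S) := by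
  induction S using Finset.strongInduction with
  | H S ih =>
    intro i hi
    -- Split `S` into the neighbours `S₁` of `i` and the rest `S₂`: `A i` is independent of
    -- avoiding `S₂`, and adding `S₁` to the conditioning set costs at most a factor
    -- `∏ j ∈ S₁, (1 - x j)`.
    set S₁ := S ∩ Γ i
    set S₂ := S \ Γ i
    have hS : S₂ ∪ S₁ = S := sdiff_union_inter S (Γ i)
    have hS₁ : S₁ ⊆ (Γ i).erase i := fun j hj =>
      mem_erase.mpr ⟨fun hji => hi (hji ▸ (mem_inter.mp hj).1), (mem_inter.mp hj).2⟩
    have hpeel := prod_one_sub_mul_card_avoiding_le x hx1 S₂ S₁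
      (disjoint_sdiff_inter S (Γ i)) fun V hV j _ hj => ih V (hS ▸ hV) j hj
    rw [hS] at hpeel
    have hindep : (#(A i ∩ avoiding A S₂) : ℝ) * Fintype.card Ω =
        #(A i) * #(avoiding A S₂) := by
      exact_mod_cast hind i S₂ sdiff_disjoint
    have hprod : ∏ j ∈ (Γ i).erase i, (1 - x j) ≤ ∏ j ∈ S₁, (1 - x j) :=
      prod_le_prod_of_subset_of_le_one hS₁ (fun j _ => sub_nonneg.mpr (hx1 j))
        (fun j _ _ => sub_le_self 1 (hx0 j))
    have hΩ : (0 : ℝ) < Fintype.card Ω := by exact_mod_cast Fintype.card_pos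
    refine le_of_mul_le_mul_right ?_ hΩ
    calc (#(A i ∩ avoiding A S) : ℝ) * Fintype.card Ω
        ≤ #(A i ∩ avoiding A S₂) * Fintype.card Ω := by
          gcongr
          exact avoiding_anti A sdiff_subset
      _ = #(A i) * #(avoiding A S₂) := hindep
      _ ≤ x i * (∏ j ∈ (Γ i).erase i, (1 - x j)) * Fintype.card Ω *
          #(avoiding A S₂) := by
          gcongr
          exact hA i
      _ ≤ x i * ((∏ j ∈ S₁, (1 - x j)) * #(avoiding A S₂)) * Fintype.card Ω := by
          rw [mul_right_comm _ (Fintype.card Ω : ℝ), mul_assoc (x i)]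
          gcongr
          exact hx0 i
      _ ≤ x i * #(avoiding A S) * Fintype.card Ω := by
          gcongr
          exact hx0 i

variable [Fintype ι]

theorem exists_forall_notMem_of_lovasz (hx0 : ∀ i, 0 ≤ x i) (hx1 : ∀ i, x i < 1)
    (hA : ∀ i, (#(A i) : ℝ) ≤ x i * (∏ j ∈ (Γ i).erase i, (1 - x j)) * Fintype.card Ω)
    (hind : ∀ i S, Disjoint S (Γ i) →
      #(A i ∩ avoiding A S) * Fintype.card Ω = #(A i) * #(avoiding A S)) :
    ∃ ω, ∀ i, ω ∉ A i := by
  have hbound := prod_one_sub_mul_card_avoiding_le x (fun i => (hx1 i).le) ∅ univ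
    (disjoint_empty_left _)
    fun V _ j _ hj => card_inter_avoiding_le x hx0 (fun i => (hx1 i).le) hA hind V j hj
  have hpos : (0 : ℝ) < (∏ j, (1 - x j)) * #(avoiding A (∅ : Finset ι)) := by
    have : #(avoiding A (∅ : Finset ι)) = Fintype.card Ω := by simp [avoiding]
    rw [this]
    exact mul_pos (prod_pos fun j _ => sub_pos.mpr (hx1 j)) (by exact_mod_cast Fintype.card_pos)
  obtain ⟨ω, hω⟩ := card_pos.mp (by exact_mod_cast hpos.trans_le hbound)
  refine ⟨ω, fun i hi => ?_⟩
  simp only [avoiding, empty_union, mem_sdiff, mem_biUnion] at hω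
  exact hω.2 ⟨i, mem_univ i, hi⟩

theorem exists_forall_notMem_of_symmetric_lovasz (p : ℝ) (D : ℕ) (hself : ∀ i, i ∈ Γ i)
    (hΓ : ∀ i, #(Γ i) ≤ D) (hp : ∀ i, (#(A i) : ℝ) ≤ p * Fintype.card Ω)
    (hind : ∀ i S, Disjoint S (Γ i) →
      #(A i ∩ avoiding A S) * Fintype.card Ω = #(A i) * #(avoiding A S))
    (hcond : Real.exp 1 * p * D ≤ 1) :
    ∃ ω, ∀ i, ω ∉ A i := by
  -- `x = 1/(D+1)` works because `(1 + 1/D)^D ≤ e`.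
  have hD : ∀ i : ι, 0 < D := fun i => (card_pos.mpr ⟨i, hself i⟩).trans_le (hΓ i)
  refine exists_forall_notMem_of_lovasz (fun _ => (D + 1 : ℝ)⁻¹) (fun _ => by positivity)
    (fun i => inv_lt_one_of_one_lt₀ (by have := hD i; norm_cast; omega)) (fun i => ?_) hind
  have hΩ : (0 : ℝ) ≤ Fintype.card Ω := Nat.cast_nonneg _
  have hp' : p ≤ (Real.exp 1 * D)⁻¹ := by
    rw [← one_div, le_div_iff₀ (by have := hD i; positivity)]
    linarith
  have hdeg : #((Γ i).erase i) ≤ D - 1 := by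
    rw [card_erase_of_mem (hself i)]; exact Nat.sub_le_sub_right (hΓ i) 1
  calc (#(A i) : ℝ) ≤ p * Fintype.card Ω := hp i
    _ ≤ (D + 1 : ℝ)⁻¹ * (1 - (D + 1 : ℝ)⁻¹) ^ (D - 1) * Fintype.card Ω := by
        gcongr
        exact hp'.trans (inv_exp_mul_le_inv_succ_mul_pow D (hD i))
    _ ≤ _ := by
        rw [prod_const]
        refine mul_le_mul_of_nonneg_right (mul_le_mul_of_nonneg_left
          (pow_le_pow_of_le_one ?_ ?_ hdeg) (by positivity)) hΩ
        · exact sub_nonneg.mpr (inv_le_one_of_one_le₀ (by linarith))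
        · exact sub_le_self _ (by positivity)

end LovaszLocalLemma

theorem card_inter_mul_card_eq_of_dependsOn {κ : Type*} [Fintype κ] [DecidableEq κ]
    {β : κ → Type*} [∀ j, Fintype (β j)] [∀ j, DecidableEq (β j)] (T : Finset κ)
    {B₁ B₂ : Finset (∀ j, β j)} (h₁ : DependsOn (· ∈ B₁) (T : Set κ))
    (h₂ : DependsOn (· ∈ B₂) (T : Set κ)ᶜ) :
    #(B₁ ∩ B₂) * Fintype.card (∀ j, β j) = #B₁ * #B₂ := by
  have mem₁ : ∀ {ω} (ρ), ω ∈ B₁ → T.piecewise ω ρ ∈ B₁ := fun {ω} ρ =>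
    (h₁ (x := ω) (y := T.piecewise ω ρ) fun j hj => (piecewise_eq_of_mem _ _ _ hj).symm).mp
  have mem₂ : ∀ {ω} (ρ), ω ∈ B₂ → T.piecewise ρ ω ∈ B₂ := fun {ω} ρ =>
    (h₂ (x := ω) (y := T.piecewise ρ ω) fun j hj => (piecewise_eq_of_notMem _ _ _ hj).symm).mp
  -- Exchanging the `T`-coordinates of a pair is an involution of `Ω × Ω` carrying
  -- `(B₁ ∩ B₂) × Ω` onto `B₁ × B₂`.
  have mix_mix : ∀ ω ρ : ∀ j, β j,
      T.piecewise (T.piecewise ω ρ) (T.piecewise ρ ω) = ω := by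
    intro ω ρ
    rw [piecewise_idem_left, piecewise_idem_right, piecewise_same]
  rw [← card_univ, ← card_product, ← card_product]
  refine card_nbij' (fun q => (T.piecewise q.1 q.2, T.piecewise q.2 q.1))
    (fun q => (T.piecewise q.1 q.2, T.piecewise q.2 q.1)) ?_ ?_ ?_ ?_
  · rintro ⟨ω, ρ⟩ hq
    simp only [coe_product, Set.mem_prod, mem_coe, mem_inter] at hq ⊢
    exact ⟨mem₁ ρ hq.1.1, mem₂ ρ hq.1.2⟩
  · rintro ⟨ω, ρ⟩ hq
    simp only [coe_product, Set.mem_prod, mem_coe, mem_inter, mem_univ, and_true] at hq ⊢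
    exact ⟨mem₁ ρ hq.1, mem₂ ω hq.2⟩
  · rintro ⟨ω, ρ⟩ -
    simp only [mix_mix]
  · rintro ⟨ω, ρ⟩ -
    simp only [mix_mix]

theorem card_filter_forall_apply_eq {κ β : Type*} [Fintype κ] [DecidableEq κ] [Fintype β]
    [DecidableEq β] (s : Finset κ) (a : s → β) :
    #(univ.filter fun g : κ → β => ∀ j : s, g j = a j) = Fintype.card β ^ #sᶜ := by
  have hpi : (univ.filter fun g : κ → β => ∀ j : s, g j = a j) =
      Fintype.piFinset fun j => if h : j ∈ s then {a ⟨j, h⟩} else univ := by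
    ext g
    simp only [mem_filter, mem_univ, true_and, Fintype.mem_piFinset]
    constructor
    · intro hg j
      split_ifs with h
      · exact mem_singleton.mpr (hg ⟨j, h⟩)
      · exact mem_univ _
    · intro hg j
      simpa [j.2] using hg j
  have hout : ∀ j ∈ sᶜ,
      #(if h : j ∈ s then {a ⟨j, h⟩} else (univ : Finset β)) = Fintype.card β :=
    fun j hj => by rw [dif_neg (mem_compl.mp hj), card_univ]
  have hin : ∀ j ∈ s, #(if h : j ∈ s then {a ⟨j, h⟩} else (univ : Finset β)) = 1 :=
    fun j hj => by rw [dif_pos hj, card_singleton]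
  rw [hpi, Fintype.card_piFinset, ← prod_compl_mul_prod s, prod_congr rfl hout,
    prod_congr rfl hin, prod_const, prod_const_one, mul_one]

theorem dependsOn_mem_avoiding {κ : Type*} {β : κ → Type*} [Fintype (∀ j, β j)]
    [DecidableEq (∀ j, β j)] {A : ι → Finset (∀ j, β j)} {S : Finset ι} {T : Set κ}
    (h : ∀ i ∈ S, DependsOn (· ∈ A i) T) : DependsOn (· ∈ avoiding A S) T := by
  intro x y hxy
  simp only [avoiding, mem_sdiff, mem_univ, true_and, mem_biUnion, not_exists, not_and]
  exact propext (forall₂_congr fun i hi => not_congr (iff_of_eq (h i hi hxy)))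

theorem card_filter_mem_le_choose {α : Type*} [Fintype α] [DecidableEq α] (t : ℕ) (j : α) :
    #(univ.filter fun s : {s : Finset α // #s = t} => j ∈ s.1) ≤
      (Fintype.card α).choose (t - 1) := by
  calc _ ≤ #(powersetCard (t - 1) (univ : Finset α)) := by
        refine card_le_card_of_injOn (fun s => s.1.erase j) (fun s hs => ?_)
          fun s hs s' hs' h => ?_
        · rw [mem_coe, mem_filter] at hs
          rw [mem_coe, mem_powersetCard, card_erase_of_mem hs.2, s.2]
          exact ⟨subset_univ _, rfl⟩
        · rw [mem_coe, mem_filter] at hs hs'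
          exact Subtype.ext (erase_injOn' j hs.2 hs'.2 h)
    _ = _ := by rw [card_powersetCard, card_univ]

theorem card_filter_not_disjoint_le_mul_choose {α : Type*} [Fintype α] [DecidableEq α] (t : ℕ)
    (s : Finset α) :
    #(univ.filter fun s' : {s' : Finset α // #s' = t} => ¬Disjoint s'.1 s) ≤
      #s * (Fintype.card α).choose (t - 1) := by
  calc _ ≤ #(s.biUnion fun j =>
        univ.filter fun s' : {s' : Finset α // #s' = t} => j ∈ s'.1) := by
        refine card_le_card fun s' hs' => ?_
        obtain ⟨j, hj', hj⟩ := not_disjoint_iff.mp (mem_filter.mp hs').2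
        exact mem_biUnion.mpr ⟨j, hj, mem_filter.mpr ⟨mem_univ _, hj'⟩⟩
    _ ≤ ∑ j ∈ s, #(univ.filter fun s' : {s' : Finset α // #s' = t} => j ∈ s'.1) :=
        card_biUnion_le
    _ ≤ _ := sum_le_card_nsmul _ _ _ fun j _ => card_filter_mem_le_choose t j

namespace CoveringArray

abbrev Interaction (t k v : ℕ) := Σ s : {s : Finset (Fin k) // #s = t}, (s.1 → Fin v)

variable {t k v : ℕ}

-- Arrays are stored column-major (`ω j r` is the entry in row `r`, column `j`), so that an event
-- about a set of columns depends on a set of coordinates of the pi type.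
def uncovered (N : ℕ) (i : Interaction t k v) : Finset (Fin k → Fin N → Fin v) :=
  univ.filter fun ω => ∀ r, ∃ j : i.1.1, ω j r ≠ i.2 j

def overlapping (i : Interaction t k v) : Finset (Interaction t k v) :=
  (univ.filter fun s : {s : Finset (Fin k) // #s = t} => ¬Disjoint s.1 i.1.1).sigma fun _ => univ

theorem card_uncovered (N : ℕ) (hv : 0 < v) (i : Interaction t k v) :
    (#(uncovered N i) : ℝ) =
      (1 - 1 / (v : ℝ) ^ t) ^ N * Fintype.card (Fin k → Fin N → Fin v) := by
  set agreeing := univ.filter fun g : Fin k → Fin v => ∀ j : i.1.1, g j = i.2 j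
  have hrows : #(uncovered N i) = #agreeingᶜ ^ N := by
    rw [← Fintype.card_piFinset_const]
    refine card_equiv (Equiv.piComm fun _ _ => Fin v) fun ω => ?_
    simp [uncovered, agreeing, Fintype.mem_piFinset, Equiv.piComm_apply]
  have hsplit : (v : ℝ) ^ t * v ^ #(i.1.1)ᶜ = v ^ k := by
    have hk := card_add_card_compl i.1.1
    rw [i.1.2, Fintype.card_fin] at hk
    rw [← pow_add, hk]
  have hagree : #agreeing = v ^ #(i.1.1)ᶜ := by
    rw [card_filter_forall_apply_eq, Fintype.card_fin]
  have hdisagree : (#agreeingᶜ : ℝ) = (1 - 1 / (v : ℝ) ^ t) * v ^ k := by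
    have hsum := card_compl_add_card agreeing
    rw [hagree, Fintype.card_fun, Fintype.card_fin, Fintype.card_fin] at hsum
    have hsum' : (#agreeingᶜ : ℝ) + (v : ℝ) ^ #(i.1.1)ᶜ = (v : ℝ) ^ k := by
      exact_mod_cast hsum
    have hvt : (v : ℝ) ^ t ≠ 0 := by positivity
    rw [eq_sub_of_add_eq hsum', ← hsplit]
    field_simp
  rw [hrows, Nat.cast_pow, hdisagree, Fintype.card_fun, Fintype.card_fun, Fintype.card_fin,
    Fintype.card_fin, Fintype.card_fin, Nat.cast_pow, Nat.cast_pow, mul_pow, ← pow_mul,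
    ← pow_mul, mul_comm k]

theorem mem_overlapping_self (ht : 0 < t) (i : Interaction t k v) : i ∈ overlapping i := by
  simp only [overlapping, mem_sigma, mem_filter, mem_univ, true_and, and_true,
    disjoint_self_iff_empty]
  exact nonempty_iff_ne_empty.mp (card_pos.mp (i.1.2.symm ▸ ht))

theorem card_overlapping_le (i : Interaction t k v) :
    #(overlapping i) ≤ t * k.choose (t - 1) * v ^ t := by
  have hvalues : ∀ s : {s : Finset (Fin k) // #s = t}, #(univ : Finset (s.1 → Fin v)) = v ^ t :=
    fun s => by rw [card_univ, Fintype.card_fun, Fintype.card_coe, s.2, Fintype.card_fin]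
  rw [overlapping, card_sigma, sum_congr rfl fun s _ => hvalues s, sum_const, smul_eq_mul]
  gcongr
  simpa only [i.1.2, Fintype.card_fin] using card_filter_not_disjoint_le_mul_choose t i.1.1

theorem uncovered_dependsOn (N : ℕ) (i : Interaction t k v) :
    DependsOn (· ∈ uncovered N i) (i.1.1 : Set (Fin k)) := by
  intro ω ω' h
  have h' : ∀ j : i.1.1, ω j = ω' j := fun j => h j j.2
  simp only [uncovered, mem_filter, mem_univ, true_and, h']

theorem card_inter_avoiding_uncovered (N : ℕ) (i : Interaction t k v)
    (S : Finset (Interaction t k v)) (hS : Disjoint S (overlapping i)) :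
    #(uncovered N i ∩ avoiding (uncovered N) S) * Fintype.card (Fin k → Fin N → Fin v) =
      #(uncovered N i) * #(avoiding (uncovered N) S) := by
  refine card_inter_mul_card_eq_of_dependsOn i.1.1 (uncovered_dependsOn N i)
    (dependsOn_mem_avoiding fun i' hi' => (uncovered_dependsOn N i').mono ?_)
  have : Disjoint i'.1.1 i.1.1 := by
    simpa [overlapping] using disjoint_left.mp hS hi'
  exact Set.subset_compl_iff_disjoint_right.mpr (disjoint_coe.mpr this)

theorem isCoveringArray_of_forall_notMem_uncovered {N : ℕ} (ω : Fin k → Fin N → Fin v)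
    (h : ∀ i : Interaction t k v, ω ∉ uncovered N i) :
    IsCoveringArray N t k v fun r j => ω j r := by
  intro c hc a
  let s := univ.map ⟨c, hc⟩
  have hs : #s = t := by simp [s]
  let index : s → Fin t := fun j =>
    (Equiv.ofInjective c hc).symm ⟨j, by simpa [s] using mem_map.mp j.2⟩
  obtain ⟨r, hr⟩ : ∃ r, ∀ j : s, ω j r = a (index j) := by
    simpa [uncovered] using h ⟨⟨s, hs⟩, a ∘ index⟩
  refine ⟨r, fun l => ?_⟩
  simpa [index] using hr ⟨c l, by simp [s]⟩

end CoveringArray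

theorem lll_finite_general (t k v N : ℕ) (ht : 2 ≤ t) (hv : 2 ≤ v)
    (h : Real.exp 1 * (1 - 1 / (v : ℝ) ^ t) ^ N * (v : ℝ) ^ t * (t : ℝ) *
        (Nat.choose k (t - 1) : ℝ) ≤ 1) :
    (∃ A : Fin N → Fin k → Fin v, IsCoveringArray N t k v A) ∧ CAN t k v ≤ N := by
  have : NeZero v := ⟨by omega⟩
  obtain ⟨ω, hω⟩ := exists_forall_notMem_of_symmetric_lovasz (A := CoveringArray.uncovered N)
    (Γ := CoveringArray.overlapping) ((1 - 1 / (v : ℝ) ^ t) ^ N) (t * k.choose (t - 1) * v ^ t)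
    (CoveringArray.mem_overlapping_self (by omega)) CoveringArray.card_overlapping_le
    (fun i => (CoveringArray.card_uncovered N (by omega) i).le)
    (CoveringArray.card_inter_avoiding_uncovered N) (by push_cast; linarith)
  have hA := CoveringArray.isCoveringArray_of_forall_notMem_uncovered ω hω
  exact ⟨⟨_, hA⟩, Nat.sInf_le ⟨_, hA⟩⟩

theorem lll_finite (t k v N : ℕ) (ht : 2 ≤ t) (hk : 2 * t ≤ k) (hv : 2 ≤ v)
    (hN : 1 ≤ N)
    (h : Real.exp 1 * (1 - 1 / (v : ℝ) ^ t) ^ N * (v : ℝ) ^ t * (t : ℝ) *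
        (Nat.choose k (t - 1) : ℝ) ≤ 1) :
    (∃ A : Fin N → Fin k → Fin v, IsCoveringArray N t k v A) ∧ CAN t k v ≤ N :=
  lll_finite_general t k v N ht hv h
end

section
/- Let t, k, v, n be integers with k ≥ 2t, t ≥ 2, v ≥ 2 and n ≥ 1. If e·v^{t−1}·(1 − 1/v^{t−1})^n·t·C(k,t−1) < 1, then CAN(t,k,v) ≤ v·n. (Here e is Euler's number.) -/
open Finset

section Avoidance

variable {Ω σ : Type*} [Fintype Ω] [DecidableEq Ω] [DecidableEq σ] (E : σ → Finset Ω)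

lemma card_compl_biUnion_insert_add (j : σ) (S : Finset σ) :
    #((insert j S).biUnion E)ᶜ + #(E j ∩ (S.biUnion E)ᶜ) = #(S.biUnion E)ᶜ := by
  rw [biUnion_insert, compl_union, ← card_sdiff_add_card_inter (S.biUnion E)ᶜ (E j),
    inter_comm (E j), sdiff_eq_inter_compl, inter_comm]

lemma one_sub_pow_mul_card_compl_biUnion_le {x : ℝ} (hx : x ≤ 1) {U T : Finset σ}
    (hUT : Disjoint U T)
    (h : ∀ j ∈ T, ∀ R ⊆ U ∪ T, j ∉ R → (#(E j ∩ (R.biUnion E)ᶜ) : ℝ) ≤ x * #(R.biUnion E)ᶜ) :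
    (1 - x) ^ #T * #(U.biUnion E)ᶜ ≤ (#((U ∪ T).biUnion E)ᶜ : ℝ) := by
  induction T using Finset.induction_on with
  | empty => simp
  | insert j T hj ih =>
    have hUT' : U ∪ T ⊆ U ∪ insert j T := union_subset_union_right (subset_insert j T)
    have hjUT : j ∉ U ∪ T := by
      simp [hj, disjoint_right.1 hUT (mem_insert_self j T)]
    have hpeel := ih (disjoint_of_subset_right (subset_insert j T) hUT)
      fun i hi R hR => h i (mem_insert_of_mem hi) R (hR.trans hUT')
    have hstep := h j (mem_insert_self j T) (U ∪ T) hUT' hjUT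
    have hsplit : (#((insert j (U ∪ T)).biUnion E)ᶜ : ℝ) + #(E j ∩ ((U ∪ T).biUnion E)ᶜ)
        = #((U ∪ T).biUnion E)ᶜ := by exact_mod_cast card_compl_biUnion_insert_add E j (U ∪ T)
    rw [card_insert_of_notMem hj, pow_succ', union_insert, mul_assoc]
    linarith [mul_le_mul_of_nonneg_left hpeel (sub_nonneg.2 hx)]

end Avoidance

section Product

variable {ι β : Type*} [Fintype ι] [DecidableEq ι] [Fintype β] [DecidableEq β]

lemma card_inter_mul_card_eq_of_dependsOn_s12 {W : Finset ι} {A B : Finset (ι → β)}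
    (hA : DependsOn (· ∈ A) (W : Set ι)) (hB : DependsOn (· ∈ B) (W : Set ι)ᶜ) :
    #(A ∩ B) * Fintype.card (ι → β) = #A * #B := by
  set swap : (ι → β) × (ι → β) → (ι → β) × (ι → β) :=
    fun p => (W.piecewise p.1 p.2, W.piecewise p.2 p.1)
  have hswap : ∀ p, swap (swap p) = p := fun p => by
    ext j <;> by_cases hj : j ∈ W <;> simp [swap, hj]
  have hA' : ∀ f g, W.piecewise f g ∈ A ↔ f ∈ A := fun f g =>
    Iff.of_eq (hA fun j hj => piecewise_eq_of_mem W f g hj)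
  have hB' : ∀ f g, W.piecewise f g ∈ B ↔ g ∈ B := fun f g =>
    Iff.of_eq (hB fun j hj => piecewise_eq_of_notMem W f g hj)
  -- exchanging the `W`-coordinates of two points maps `(A ∩ B) × univ` onto `A × B`
  rw [← card_univ, ← card_product, ← card_product]
  refine card_nbij' swap swap ?_ ?_ (fun p _ => hswap p) (fun p _ => hswap p) <;>
    · rintro ⟨f, g⟩ hp
      simp_all [swap]

lemma dependsOn_mem_compl_biUnion {σ : Type*} (E : σ → Finset (ι → β)) {S : Finset σ}
    {W : Set ι} (h : ∀ s ∈ S, DependsOn (· ∈ E s) W) : DependsOn (· ∈ (S.biUnion E)ᶜ) W := by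
  intro f g hfg
  simp only [mem_compl, mem_biUnion, not_exists, not_and, eq_iff_iff]
  exact forall₂_congr fun s hs => not_congr (Iff.of_eq (h s hs hfg))

end Product

lemma Real.exp_neg_one_le_one_sub_inv_pow (n : ℕ) : Real.exp (-1) ≤ (1 - ((n : ℝ) + 1)⁻¹) ^ n := by
  have hprod : (1 + (n : ℝ)⁻¹) ^ n * (1 - ((n : ℝ) + 1)⁻¹) ^ n = 1 := by
    rcases Nat.eq_zero_or_pos n with rfl | hn
    · simp
    · have : (n : ℝ) ≠ 0 := by positivity
      rw [← mul_pow, show (1 + (n : ℝ)⁻¹) * (1 - ((n : ℝ) + 1)⁻¹) = 1 by field_simp; ring,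
        one_pow]
  rw [Real.exp_neg, eq_inv_of_mul_eq_one_right hprod]
  exact inv_anti₀ (by positivity) Real.one_add_inv_pow_le_exp

section LocalLemma

variable {ι β σ : Type*} [Fintype ι] [DecidableEq ι] [Fintype β] [DecidableEq β] [Nonempty β]
  [Fintype σ] [DecidableEq σ] (E : σ → Finset (ι → β)) (V : σ → Finset ι)

theorem card_inter_compl_biUnion_le {x : ℝ} {d : ℕ} (hx0 : 0 ≤ x) (hx1 : x ≤ 1)
    (hdep : ∀ s, DependsOn (· ∈ E s) (V s : Set ι))
    (hnbr : ∀ s, #{s' | s' ≠ s ∧ ¬Disjoint (V s) (V s')} ≤ d)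
    (hE : ∀ s, (#(E s) : ℝ) ≤ x * (1 - x) ^ d * Fintype.card (ι → β))
    (S : Finset σ) : ∀ i ∉ S, (#(E i ∩ (S.biUnion E)ᶜ) : ℝ) ≤ x * #(S.biUnion E)ᶜ := by
  induction S using Finset.strongInduction with | H S ih =>
  intro i hi
  -- peel off the events of `S` meeting `V i` by induction; the others are independent of `E i`
  set S₁ := {s ∈ S | ¬Disjoint (V i) (V s)}
  set S₂ := {s ∈ S | Disjoint (V i) (V s)}
  have hS : S₂ ∪ S₁ = S := filter_union_filter_not_eq _ S
  have hS₁ : #S₁ ≤ d := by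
    refine (card_le_card fun s hs => ?_).trans (hnbr i)
    obtain ⟨hsS, hsi⟩ := mem_filter.1 hs
    exact mem_filter.2 ⟨mem_univ s, fun h => hi (h ▸ hsS), hsi⟩
  have hpeel : (1 - x) ^ #S₁ * #(S₂.biUnion E)ᶜ ≤ (#(S.biUnion E)ᶜ : ℝ) := by
    rw [← hS]
    refine one_sub_pow_mul_card_compl_biUnion_le E hx1 (disjoint_filter_filter_not _ _ _)
      fun j hj R hR hjR => ih R ?_ j hjR
    exact ssubset_of_subset_of_ne (hS ▸ hR) fun h => hjR (h ▸ (filter_subset _ S) hj)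
  have hindep : (#(E i ∩ (S₂.biUnion E)ᶜ) : ℝ) * Fintype.card (ι → β)
      = #(E i) * #(S₂.biUnion E)ᶜ := by
    exact_mod_cast card_inter_mul_card_eq_of_dependsOn_s12 (hdep i) <|
      dependsOn_mem_compl_biUnion E fun s hs =>
        (hdep s).mono (Set.subset_compl_iff_disjoint_left.2 (by exact_mod_cast (mem_filter.1 hs).2))
  have hΩ : (0 : ℝ) < Fintype.card (ι → β) := by exact_mod_cast Fintype.card_pos
  have hcond : (#(E i ∩ (S₂.biUnion E)ᶜ) : ℝ) ≤ x * (1 - x) ^ d * #(S₂.biUnion E)ᶜ := by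
    refine le_of_mul_le_mul_right ?_ hΩ
    rw [hindep, mul_right_comm]
    exact mul_le_mul_of_nonneg_right (hE i) (Nat.cast_nonneg _)
  calc (#(E i ∩ (S.biUnion E)ᶜ) : ℝ)
      ≤ #(E i ∩ (S₂.biUnion E)ᶜ) := by
        exact_mod_cast card_le_card <| inter_subset_inter_left <| compl_subset_compl.2 <|
          biUnion_subset_biUnion_of_subset_left _ (filter_subset _ S)
    _ ≤ x * (1 - x) ^ d * #(S₂.biUnion E)ᶜ := hcond
    _ ≤ x * ((1 - x) ^ #S₁ * #(S₂.biUnion E)ᶜ) := by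
        rw [← mul_assoc]
        have := pow_le_pow_of_le_one (sub_nonneg.2 hx1) (by linarith) hS₁
        gcongr
    _ ≤ x * #(S.biUnion E)ᶜ := by gcongr

theorem exists_forall_notMem_of_dependsOn {x : ℝ} {d : ℕ} (hx0 : 0 ≤ x) (hx1 : x < 1)
    (hdep : ∀ s, DependsOn (· ∈ E s) (V s : Set ι))
    (hnbr : ∀ s, #{s' | s' ≠ s ∧ ¬Disjoint (V s) (V s')} ≤ d)
    (hE : ∀ s, (#(E s) : ℝ) ≤ x * (1 - x) ^ d * Fintype.card (ι → β)) :
    ∃ f : ι → β, ∀ s, f ∉ E s := by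
  have h := one_sub_pow_mul_card_compl_biUnion_le E hx1.le (disjoint_empty_left univ)
    fun j _ R _ hjR => card_inter_compl_biUnion_le E V hx0 hx1.le hdep hnbr hE R j hjR
  rw [empty_union, biUnion_empty, compl_empty, card_univ] at h
  obtain ⟨f, hf⟩ : ((univ : Finset σ).biUnion E)ᶜ.Nonempty := by
    rw [← card_pos, ← Nat.cast_pos (α := ℝ)]
    exact lt_of_lt_of_le (by have := hx1; positivity) h
  exact ⟨f, fun s hs => mem_compl.1 hf (mem_biUnion.2 ⟨s, mem_univ s, hs⟩)⟩

theorem exists_forall_notMem_of_exp_mul_le {p : ℝ} {d : ℕ}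
    (hdep : ∀ s, DependsOn (· ∈ E s) (V s : Set ι))
    (hnbr : ∀ s, #{s' | s' ≠ s ∧ ¬Disjoint (V s) (V s')} ≤ d)
    (hE : ∀ s, (#(E s) : ℝ) ≤ p * Fintype.card (ι → β))
    (hp : Real.exp 1 * p * (d + 1) ≤ 1) :
    ∃ f : ι → β, ∀ s, f ∉ E s := by
  -- `x = 1/(d+2)` rather than the usual `1/(d+1)`, which equals `1` when `d = 0`
  have hx1 : ((d : ℝ) + 2)⁻¹ < 1 := inv_lt_one_of_one_lt₀ (by linarith [d.cast_nonneg (α := ℝ)])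
  have hx : ((d : ℝ) + 2)⁻¹ = ((d : ℝ) + 1)⁻¹ * (1 - ((d : ℝ) + 2)⁻¹) := by field_simp; ring
  have he := Real.exp_neg_one_le_one_sub_inv_pow (d + 1)
  rw [Nat.cast_add_one, add_assoc, one_add_one_eq_two] at he
  have hpx : p ≤ ((d : ℝ) + 2)⁻¹ * (1 - ((d : ℝ) + 2)⁻¹) ^ d := by
    calc p ≤ ((d : ℝ) + 1)⁻¹ * Real.exp (-1) := by
          rw [Real.exp_neg, ← mul_inv, ← one_div, le_div_iff₀ (by positivity)]
          linarith
      _ ≤ ((d : ℝ) + 1)⁻¹ * (1 - ((d : ℝ) + 2)⁻¹) ^ (d + 1) := by gcongr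
      _ = _ := by rw [pow_succ', ← mul_assoc, ← hx]
  exact exists_forall_notMem_of_dependsOn E V (by positivity) hx1 hdep hnbr
    fun s => (hE s).trans (by gcongr)

end LocalLemma

section Orbits

variable {κ G : Type*} [AddGroup G]

def CoversOrbit {t : ℕ} (f : κ → G) (c : Fin t → κ) (a : Fin t → G) : Prop :=
  ∃ g, ∀ i, f (c i) + g = a i

instance {t : ℕ} [Fintype G] [DecidableEq G] (f : κ → G) (c : Fin t → κ) (a : Fin t → G) :
    Decidable (CoversOrbit f c a) :=
  inferInstanceAs (Decidable (∃ g, ∀ i, f (c i) + g = a i))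

lemma CoversOrbit.of_comp_perm {t : ℕ} {f : κ → G} {c : Fin t → κ} {a : Fin t → G}
    (π : Equiv.Perm (Fin t)) (h : CoversOrbit f (c ∘ π) (a ∘ π)) : CoversOrbit f c a :=
  let ⟨g, hg⟩ := h
  ⟨g, fun i => by simpa using hg (π.symm i)⟩

lemma CoversOrbit.add_const {t : ℕ} {f : κ → G} {c : Fin t → κ} {a : Fin t → G}
    (h : CoversOrbit f c a) (g₀ : G) : CoversOrbit f c (fun i => a i + g₀) :=
  let ⟨g, hg⟩ := h
  ⟨g + g₀, fun i => by rw [← add_assoc, hg]⟩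

variable [Fintype κ] [DecidableEq κ] [Fintype G] [DecidableEq G]

theorem card_pow_le_card_coversOrbit_mul {s : ℕ} {c : Fin (s + 1) → κ}
    (hc : Function.Injective c) (a : Fin (s + 1) → G) :
    Fintype.card G ^ Fintype.card κ ≤ #{f : κ → G | CoversOrbit f c a} * Fintype.card G ^ s := by
  -- `f` is recovered from its projection `proj f` onto the orbit and from the `f (c i.succ)`
  let proj : (κ → G) → κ → G := fun f => Function.extend c (fun i => a i - a 0 + f (c 0)) f
  have hproj : ∀ f i, proj f (c i) = a i - a 0 + f (c 0) := fun f i => hc.extend_apply _ _ i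
  have hcovers : ∀ f, CoversOrbit (proj f) c a := fun f =>
    ⟨-f (c 0) + a 0, fun i => by simp [hproj, add_assoc]⟩
  let φ : (κ → G) → {f // CoversOrbit f c a} × (Fin s → G) :=
    fun f => (⟨proj f, hcovers f⟩, fun i => f (c i.succ))
  have hφ : Function.Injective φ := by
    intro f f' hff'
    simp only [φ, Prod.mk.injEq, Subtype.mk.injEq, funext_iff] at hff'
    obtain ⟨hp, hs⟩ := hff'
    funext j
    by_cases hj : ∃ i, c i = j
    · obtain ⟨i, rfl⟩ := hj
      cases i using Fin.cases with
      | zero => simpa [hproj] using hp (c 0)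
      | succ i => exact hs i
    · simpa [proj, Function.extend_apply' _ _ _ hj] using hp j
  simpa [Fintype.card_subtype] using Fintype.card_le_of_injective φ hφ

theorem card_not_coversOrbit_le {s : ℕ} {c : Fin (s + 1) → κ}
    (hc : Function.Injective c) (a : Fin (s + 1) → G) :
    (#{f : κ → G | ¬CoversOrbit f c a} : ℝ)
      ≤ (1 - 1 / (Fintype.card G : ℝ) ^ s) * Fintype.card G ^ Fintype.card κ := by
  have hsplit := card_filter_add_card_filter_not (s := (univ : Finset (κ → G)))
    fun f => CoversOrbit f c a
  rw [card_univ, Fintype.card_fun] at hsplit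
  have hgood : (Fintype.card G : ℝ) ^ Fintype.card κ / Fintype.card G ^ s
      ≤ #{f : κ → G | CoversOrbit f c a} := by
    rw [div_le_iff₀ (by positivity)]
    exact_mod_cast card_pow_le_card_coversOrbit_mul hc a
  have hbad : (#{f : κ → G | ¬CoversOrbit f c a} : ℝ)
      = Fintype.card G ^ Fintype.card κ - #{f : κ → G | CoversOrbit f c a} := by
    rw [← Nat.cast_pow, ← hsplit]; push_cast; ring
  rw [hbad, sub_mul, one_mul, one_div_mul_eq_div]
  linarith

lemma card_forall_not_coversOrbit {t : ℕ} (n : ℕ) (c : Fin t → κ) (a : Fin t → G) :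
    #{B : κ → Fin n → G | ∀ r, ¬CoversOrbit (fun j => B j r) c a}
      = #{f : κ → G | ¬CoversOrbit f c a} ^ n := by
  rw [card_equiv (Equiv.piComm _)
    (t := Fintype.piFinset fun _ : Fin n => {f : κ → G | ¬CoversOrbit f c a})]
  · simp [Fintype.card_piFinset]
  · intro B
    simp [Fintype.mem_piFinset, Equiv.piComm]

end Orbits

lemma Finset.card_filter_not_disjoint_powersetCard_le {κ : Type*} [Fintype κ] [DecidableEq κ]
    (T : Finset κ) (m : ℕ) :
    #{U ∈ powersetCard (m + 1) univ | ¬Disjoint T U} ≤ #T * (Fintype.card κ).choose m := by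
  calc #{U ∈ powersetCard (m + 1) univ | ¬Disjoint T U}
      ≤ #((T ×ˢ powersetCard m univ).image fun p => insert p.1 p.2) := card_le_card ?_
    _ ≤ #(T ×ˢ powersetCard m univ) := card_image_le
    _ = #T * (Fintype.card κ).choose m := by rw [card_product, card_powersetCard, card_univ]
  intro U hU
  obtain ⟨hU, hTU⟩ := mem_filter.1 hU
  obtain ⟨j, hjT, hjU⟩ := not_disjoint_iff.1 hTU
  refine mem_image.2 ⟨(j, U.erase j), mem_product.2 ⟨hjT, mem_powersetCard.2 ⟨subset_univ _, ?_⟩⟩,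
    insert_erase hjU⟩
  rw [card_erase_of_mem hjU, (mem_powersetCard.1 hU).2, Nat.add_sub_cancel]

lemma card_neighbors_add_one_le {κ G : Type*} [Fintype κ] [DecidableEq κ] [Fintype G]
    [DecidableEq G] {s : ℕ} (x : {T : Finset κ // #T = s + 1} × (Fin s → G)) :
    #{y | y ≠ x ∧ ¬Disjoint x.1.1 y.1.1} + 1
      ≤ (s + 1) * (Fintype.card κ).choose s * Fintype.card G ^ s := by
  obtain ⟨⟨T, hT⟩, a⟩ := x
  set nbrs : Finset ({T : Finset κ // #T = s + 1} × (Fin s → G)) :=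
    {y | y ≠ (⟨T, hT⟩, a) ∧ ¬Disjoint T y.1.1}
  have hTT : ¬Disjoint T T := by
    rw [disjoint_self_iff_empty, ← Ne, ← nonempty_iff_ne_empty, ← card_pos, hT]
    exact s.succ_pos
  rw [← card_insert_of_notMem (by simp [nbrs] : (⟨⟨T, hT⟩, a⟩ : _ × _) ∉ nbrs)]
  calc #(insert (⟨T, hT⟩, a) nbrs)
      ≤ #(({T' | ¬Disjoint T T'.1} : Finset {T : Finset κ // #T = s + 1}) ×ˢ
          (univ : Finset (Fin s → G))) := by
        refine card_le_card fun y hy => ?_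
        rcases mem_insert.1 hy with rfl | hy
        · simpa using hTT
        · simpa using (mem_filter.1 hy).2.2
    _ = #{T' : {T : Finset κ // #T = s + 1} | ¬Disjoint T T'.1} * Fintype.card G ^ s := by
        rw [card_product, card_univ, Fintype.card_fun, Fintype.card_fin]
    _ ≤ (s + 1) * (Fintype.card κ).choose s * Fintype.card G ^ s := by
        gcongr
        calc #{T' : {T : Finset κ // #T = s + 1} | ¬Disjoint T T'.1}
            ≤ #{U ∈ powersetCard (s + 1) univ | ¬Disjoint T U} :=
              card_le_card_of_injOn Subtype.val
                (fun T' hT' => by simpa [mem_powersetCard, T'.2] using hT')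
                Subtype.val_injective.injOn
          _ ≤ (s + 1) * (Fintype.card κ).choose s :=
              hT ▸ card_filter_not_disjoint_powersetCard_le T s

theorem forall_coversOrbit_of_orderEmbOfFin {κ G ρ : Type*} [LinearOrder κ] [AddGroup G] {s : ℕ}
    {F : ρ → κ → G}
    (h : ∀ (T : Finset κ) (hT : #T = s + 1) (a : Fin s → G),
      ∃ r, CoversOrbit (F r) (T.orderEmbOfFin hT) (Fin.cons 0 a))
    (c : Fin (s + 1) → κ) (hc : Function.Injective c) (a : Fin (s + 1) → G) :
    ∃ r, CoversOrbit (F r) c a := by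
  set π := Tuple.sort c
  have hT : #(univ.image c) = s + 1 := by
    rw [card_image_of_injective _ hc, card_univ, Fintype.card_fin]
  have hsorted : c ∘ π = (univ.image c).orderEmbOfFin hT :=
    orderEmbOfFin_unique hT (fun i => mem_image_of_mem _ (mem_univ _))
      ((Tuple.monotone_sort c).strictMono_of_injective (hc.comp π.injective))
  set b : Fin s → G := fun i => a (π i.succ) - a (π 0)
  obtain ⟨r, hr⟩ := h _ hT b
  have ha : a ∘ π = fun i => (Fin.cons 0 b : Fin (s + 1) → G) i + a (π 0) := by
    funext i
    cases i using Fin.cases <;> simp [b]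
  exact ⟨r, CoversOrbit.of_comp_perm π (hsorted ▸ ha ▸ hr.add_const _)⟩

section BaseArray

variable {κ G : Type*} [Fintype κ] [LinearOrder κ] [AddGroup G] [Fintype G] [DecidableEq G]

theorem exists_forall_coversOrbit_orderEmbOfFin {n s : ℕ} (hs : s ≤ Fintype.card κ)
    (h : Real.exp 1 * (1 - 1 / (Fintype.card G : ℝ) ^ s) ^ n *
      ((s + 1) * (Fintype.card κ).choose s * Fintype.card G ^ s) ≤ 1) :
    ∃ B : κ → Fin n → G, ∀ (T : Finset κ) (hT : #T = s + 1) (a : Fin s → G),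
      ∃ r, CoversOrbit (fun j => B j r) (T.orderEmbOfFin hT) (Fin.cons 0 a) := by
  set D := (s + 1) * (Fintype.card κ).choose s * Fintype.card G ^ s
  have hD : 0 < D := by have := Nat.choose_pos hs; positivity
  have hΩ : Fintype.card (κ → Fin n → G) = (Fintype.card G ^ Fintype.card κ) ^ n := by
    rw [Fintype.card_fun, Fintype.card_fun, Fintype.card_fin, ← pow_mul, ← pow_mul, mul_comm]
  -- one bad event per set `T` of `s + 1` columns and per orbit, represented by `Fin.cons 0 a`
  obtain ⟨B, hB⟩ := exists_forall_notMem_of_exp_mul_le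
    (σ := {T : Finset κ // #T = s + 1} × (Fin s → G))
    (fun x => ({B | ∀ r, ¬CoversOrbit (fun j => B j r) (x.1.1.orderEmbOfFin x.1.2)
      (Fin.cons 0 x.2)} : Finset (κ → Fin n → G)))
    (fun x => x.1.1) (p := (1 - 1 / (Fintype.card G : ℝ) ^ s) ^ n) (d := D - 1)
    (fun x B B' hBB' => by
      simp [CoversOrbit, hBB' _ (orderEmbOfFin_mem x.1.1 x.1.2 _)])
    (fun x => by have := card_neighbors_add_one_le x; omega)
    (fun x => by
      rw [card_forall_not_coversOrbit, hΩ, Nat.cast_pow, Nat.cast_pow, ← mul_pow]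
      gcongr
      rw [Nat.cast_pow]
      exact card_not_coversOrbit_le (orderEmbOfFin x.1.1 x.1.2).injective (Fin.cons 0 x.2))
    (by rwa [← Nat.cast_add_one, Nat.sub_add_cancel hD, Nat.cast_mul, Nat.cast_mul, Nat.cast_pow,
      Nat.cast_add_one])
  exact ⟨B, fun T hT a => by simpa using hB (⟨T, hT⟩, a)⟩

end BaseArray

def develop {k n v : ℕ} (B : Fin k → Fin n → Fin v) : Fin (v * n) → Fin k → Fin v :=
  fun r j => B j (finProdFinEquiv.symm r).2 + (finProdFinEquiv.symm r).1

theorem isCoveringArray_develop {t k n v : ℕ} [NeZero v] {B : Fin k → Fin n → Fin v}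
    (hB : ∀ c : Fin t → Fin k, Function.Injective c → ∀ a, ∃ r, CoversOrbit (fun j => B j r) c a) :
    IsCoveringArray (v * n) t k v (develop B) := by
  intro c hc a
  obtain ⟨r, g, hg⟩ := hB c hc a
  exact ⟨finProdFinEquiv (g, r), fun i => by simpa [develop] using hg i⟩

theorem cyclic_group_lll_finite_general (t k v n : ℕ) (ht : 2 ≤ t) (hk : 2 * t ≤ k)
    (hv : 2 ≤ v)
    (h : Real.exp 1 * (v : ℝ) ^ (t - 1) * (1 - 1 / (v : ℝ) ^ (t - 1)) ^ n *
        (t : ℝ) * (Nat.choose k (t - 1) : ℝ) < 1) :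
    CAN t k v ≤ v * n := by
  obtain ⟨s, rfl⟩ : ∃ s, t = s + 1 := ⟨t - 1, by omega⟩
  have : NeZero v := ⟨by omega⟩
  rw [Nat.add_sub_cancel] at h
  obtain ⟨B, hB⟩ := exists_forall_coversOrbit_orderEmbOfFin (κ := Fin k) (G := Fin v) (n := n)
    (s := s) (by rw [Fintype.card_fin]; omega)
    (by rw [Fintype.card_fin, Fintype.card_fin]; push_cast at h; linarith)
  exact Nat.sInf_le ⟨develop B, isCoveringArray_develop (forall_coversOrbit_of_orderEmbOfFin hB)⟩

theorem cyclic_group_lll_finite (t k v n : ℕ) (ht : 2 ≤ t) (hk : 2 * t ≤ k)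
    (hv : 2 ≤ v) (hn : 1 ≤ n)
    (h : Real.exp 1 * (v : ℝ) ^ (t - 1) * (1 - 1 / (v : ℝ) ^ (t - 1)) ^ n *
        (t : ℝ) * (Nat.choose k (t - 1) : ℝ) < 1) :
    CAN t k v ≤ v * n :=
  cyclic_group_lll_finite_general t k v n ht hk hv h
end

section
/- Let t, v be fixed integers with t ≥ 2 and v ≥ 2. Then d(t,v) = limsup_{k→∞} CAN(t,k,v)/log k ≤ v(t − 1) / log(v^{t−1}/(v^{t−1} − 1)). -/
/-!
Over an alphabet that is a finite group `G`, take `n` random rows of length `K` and close them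
under adding constants. A row `x` covers the `t`-way interaction `(c, a)` up to a shift iff
`x ∘ c - a` is constant, which has probability `|G|^(1-t)`; so some choice of rows leaves at most
`K^t |G|^t (1 - |G|^(1-t))^n` interactions uncovered. With `K = 2k`, once that is at most `k`,
deleting one column of each uncovered interaction leaves `k` columns and a covering array with
`|G| n` rows. For `G = ℤ/v` and `q = v^(t-1)`, the choice
`n = ⌈((t-1) log k + t log (2v)) / log (q / (q-1))⌉` suffices.
-/

open Finset Function Filter Topology

open scoped Classical

theorem card_filter_comp_eq_of_injective {ι α β : Type*} [Fintype ι] [Fintype α] [Fintype β]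
    {c : ι → α} (hc : Injective c) (a : ι → β) :
    #{x : α → β | x ∘ c = a} = Fintype.card β ^ (Fintype.card α - Fintype.card ι) := by
  let e := Equiv.ofInjective c hc
  have hfiber : ∀ x : α → β, x ∘ c = a ↔ x ∘ Subtype.val = a ∘ e.symm := by
    intro x
    rw [e.eq_comp_symm]
    rfl
  rw [← Fintype.card_subtype, Fintype.card_congr ((Equiv.subtypeEquivRight hfiber).trans
    (Equiv.subtypePreimage (· ∈ Set.range c) (a ∘ e.symm))), Fintype.card_fun,
    Fintype.card_subtype_compl, Fintype.card_congr e.symm]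

section ShiftCovers

variable {ι α β G : Type*} [AddGroup G]

def ShiftCovers (x : α → G) (c : ι → α) (a : ι → G) : Prop :=
  ∃ g : G, ∀ i, x (c i) + g = a i

variable [Fintype α] [Fintype β] [Fintype G]

theorem card_filter_forall_not_shiftCovers (c : ι → α) (a : ι → G) :
    #{B : β → α → G | ∀ r, ¬ ShiftCovers (B r) c a} =
      #{x : α → G | ¬ ShiftCovers x c a} ^ Fintype.card β := by
  rw [← card_univ (α := β), ← prod_const, ← Fintype.card_piFinset]
  congr 1
  ext B
  simp [Fintype.mem_piFinset]

variable [Fintype ι]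

theorem card_mul_pow_le_card_filter_shiftCovers [Nonempty ι] {c : ι → α} (hc : Injective c)
    (a : ι → G) :
    Fintype.card G * Fintype.card G ^ (Fintype.card α - Fintype.card ι) ≤
      #{x : α → G | ShiftCovers x c a} := by
  obtain ⟨i₀⟩ := ‹Nonempty ι›
  rw [← card_filter_comp_eq_of_injective hc a, ← card_univ, ← card_product]
  refine card_le_card_of_injOn (fun p j => p.2 j - p.1) ?_ ?_
  · rintro ⟨g, x⟩ hx
    simp only [mem_coe, mem_product, mem_filter, mem_univ, true_and] at hx ⊢
    exact ⟨g, fun i => by rw [sub_add_cancel, ← hx, comp_apply]⟩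
  · rintro ⟨g, x⟩ hx ⟨g', x'⟩ hx' h
    simp only [mem_coe, mem_product, mem_filter, mem_univ, true_and] at hx hx'
    obtain rfl : g = g' := by
      have := congrFun h (c i₀)
      simp only [← comp_apply (f := x), ← comp_apply (f := x'), hx, hx'] at this
      exact sub_right_injective this
    simp only [Prod.mk.injEq, true_and]
    funext j
    exact sub_left_injective (congrFun h j)

theorem card_filter_not_shiftCovers_le [Nonempty ι] {c : ι → α} (hc : Injective c)
    (a : ι → G) :
    (#{x : α → G | ¬ ShiftCovers x c a} : ℝ) ≤
      Fintype.card G ^ Fintype.card α *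
        (1 - (Fintype.card G ^ (Fintype.card ι - 1) : ℝ)⁻¹) := by
  have hι : 1 ≤ Fintype.card ι := Fintype.card_pos
  have hια : Fintype.card ι ≤ Fintype.card α := Fintype.card_le_of_injective c hc
  have hG : (0 : ℝ) < Fintype.card G := by exact_mod_cast Fintype.card_pos
  have hpow : (Fintype.card G : ℝ) * Fintype.card G ^ (Fintype.card α - Fintype.card ι) *
      Fintype.card G ^ (Fintype.card ι - 1) = Fintype.card G ^ Fintype.card α := by
    rw [mul_assoc, ← pow_add, ← pow_succ']
    congr 1
    omega
  have hsplit : (#{x : α → G | ShiftCovers x c a} : ℝ) + #{x : α → G | ¬ ShiftCovers x c a} =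
      Fintype.card G ^ Fintype.card α := by
    rw [← Nat.cast_add, card_filter_add_card_filter_not, card_univ, Fintype.card_fun,
      Nat.cast_pow]
  have hgood : (Fintype.card G * Fintype.card G ^ (Fintype.card α - Fintype.card ι) : ℝ) ≤
      #{x : α → G | ShiftCovers x c a} := by
    exact_mod_cast card_mul_pow_le_card_filter_shiftCovers hc a
  rw [mul_sub, mul_one, ← hpow, mul_inv_cancel_right₀ (by positivity)]
  linarith

variable (ι) in
noncomputable def uncoveredInteractions (B : β → α → G) : Finset ((ι → α) × (ι → G)) :=
  {p | Injective p.1 ∧ ∀ r, ¬ ShiftCovers (B r) p.1 p.2}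

theorem sum_card_uncoveredInteractions_le [Nonempty ι] :
    ∑ B : β → α → G, (#(uncoveredInteractions ι B) : ℝ) ≤
      Fintype.card (β → α → G) *
        (Fintype.card α ^ Fintype.card ι * Fintype.card G ^ Fintype.card ι *
          (1 - (Fintype.card G ^ (Fintype.card ι - 1) : ℝ)⁻¹) ^ Fintype.card β) := by
  set p : ℝ := 1 - (Fintype.card G ^ (Fintype.card ι - 1) : ℝ)⁻¹
  have hp : 0 ≤ p := sub_nonneg.2 <| inv_le_one_of_one_le₀ <| one_le_pow₀ <| by
    exact_mod_cast Fintype.card_pos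
  let interactions : Finset ((ι → α) × (ι → G)) := {q | Injective q.1}
  let Uncovered (B : β → α → G) (q : (ι → α) × (ι → G)) : Prop :=
    ∀ r, ¬ ShiftCovers (B r) q.1 q.2
  have hinteractions : (#interactions : ℝ) ≤
      Fintype.card α ^ Fintype.card ι * Fintype.card G ^ Fintype.card ι := by
    have := card_filter_le (univ : Finset ((ι → α) × (ι → G))) (fun q => Injective q.1)
    rw [card_univ, Fintype.card_prod, Fintype.card_fun, Fintype.card_fun] at this
    exact_mod_cast this
  have hrows : ∀ q ∈ interactions, (#(univ.bipartiteBelow Uncovered q) : ℝ) ≤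
      (Fintype.card G ^ Fintype.card α * p) ^ Fintype.card β := by
    intro q hq
    simp only [interactions, mem_filter, mem_univ, true_and] at hq
    rw [bipartiteBelow, card_filter_forall_not_shiftCovers, Nat.cast_pow]
    gcongr
    exact card_filter_not_shiftCovers_le hq q.2
  calc ∑ B : β → α → G, (#(uncoveredInteractions ι B) : ℝ)
      = ∑ q ∈ interactions, (#(univ.bipartiteBelow Uncovered q) : ℝ) := by
        rw [← Nat.cast_sum, ← Nat.cast_sum, ← sum_card_bipartiteAbove_eq_sum_card_bipartiteBelow]
        simp only [uncoveredInteractions, bipartiteAbove, interactions, Uncovered, filter_filter]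
    _ ≤ #interactions * (Fintype.card G ^ Fintype.card α * p) ^ Fintype.card β := by
        rw [← nsmul_eq_mul, ← sum_const]
        exact sum_le_sum hrows
    _ ≤ Fintype.card α ^ Fintype.card ι * Fintype.card G ^ Fintype.card ι *
          (Fintype.card G ^ Fintype.card α * p) ^ Fintype.card β := by
        gcongr
    _ = _ := by
        rw [Fintype.card_fun, Fintype.card_fun, Nat.cast_pow, Nat.cast_pow, mul_pow]
        ring

theorem exists_card_uncoveredInteractions_le [Nonempty ι] :
    ∃ B : β → α → G, (#(uncoveredInteractions ι B) : ℝ) ≤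
      Fintype.card α ^ Fintype.card ι * Fintype.card G ^ Fintype.card ι *
        (1 - (Fintype.card G ^ (Fintype.card ι - 1) : ℝ)⁻¹) ^ Fintype.card β := by
  have hsum := sum_card_uncoveredInteractions_le (ι := ι) (α := α) (β := β) (G := G)
  rw [← card_univ (α := β → α → G), ← nsmul_eq_mul, ← sum_const] at hsum
  obtain ⟨B, -, hB⟩ := exists_le_of_sum_le univ_nonempty hsum
  exact ⟨B, hB⟩

theorem exists_embedding_forall_shiftCovers [Nonempty ι] {γ : Type*} [Fintype γ]
    (B : β → α → G) (h : #(uncoveredInteractions ι B) + Fintype.card γ ≤ Fintype.card α) :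
    ∃ e : γ ↪ α, ∀ c : ι → γ, Injective c → ∀ a : ι → G, ∃ r, ShiftCovers (B r ∘ e) c a := by
  obtain ⟨i₀⟩ := ‹Nonempty ι›
  set D := (uncoveredInteractions ι B).image (fun p => p.1 i₀)
  have hcard : Fintype.card γ ≤ Fintype.card {j // j ∉ D} := by
    rw [Fintype.card_subtype_compl, Fintype.card_coe]
    have : #D ≤ #(uncoveredInteractions ι B) := card_image_le
    omega
  obtain ⟨f⟩ := Function.Embedding.nonempty_of_card_le hcard
  refine ⟨f.trans (Embedding.subtype _), fun c hc a => ?_⟩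
  by_contra! hnot
  have hmem : (f.trans (Embedding.subtype _) ∘ c, a) ∈ uncoveredInteractions ι B := by
    simp only [uncoveredInteractions, mem_filter, mem_univ, true_and]
    exact ⟨(Embedding.injective _).comp hc, hnot⟩
  exact (f (c i₀)).2 (mem_image_of_mem _ hmem)

end ShiftCovers

theorem CAN_le_of_forall_shiftCovers {t k v n : ℕ} [NeZero v] (B : Fin n → Fin k → Fin v)
    (hB : ∀ c : Fin t → Fin k, Injective c → ∀ a, ∃ r, ShiftCovers (B r) c a) :
    CAN t k v ≤ v * n := by
  let A : Fin (v * n) → Fin k → Fin v := fun s j =>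
    B (finProdFinEquiv.symm s).2 j + (finProdFinEquiv.symm s).1
  refine Nat.sInf_le ⟨A, fun c hc a => ?_⟩
  obtain ⟨r, g, hrg⟩ := hB c hc a
  exact ⟨finProdFinEquiv (g, r), fun i => by simp only [A, Equiv.symm_apply_apply]; exact hrg i⟩

theorem CAN_le_of_mul_pow_le {t k v n : ℕ} [NeZero v] (ht : 1 ≤ t)
    (h : (2 * k : ℝ) ^ t * v ^ t * (1 - (v ^ (t - 1) : ℝ)⁻¹) ^ n ≤ k) :
    CAN t k v ≤ v * n := by
  have : Nonempty (Fin t) := ⟨⟨0, ht⟩⟩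
  obtain ⟨B, hB⟩ := exists_card_uncoveredInteractions_le (ι := Fin t) (α := Fin (2 * k))
    (β := Fin n) (G := Fin v)
  simp only [Fintype.card_fin, Nat.cast_mul, Nat.cast_ofNat] at hB
  have hfew : #(uncoveredInteractions (Fin t) B) + Fintype.card (Fin k) ≤
      Fintype.card (Fin (2 * k)) := by
    have : #(uncoveredInteractions (Fin t) B) ≤ k := by exact_mod_cast hB.trans h
    simp only [Fintype.card_fin]
    omega
  obtain ⟨e, he⟩ := exists_embedding_forall_shiftCovers B hfew
  exact CAN_le_of_forall_shiftCovers (fun r => B r ∘ e) he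

theorem CAN_le_mul_log_add {t k v : ℕ} (ht : 2 ≤ t) (hv : 2 ≤ v) (hk : 1 ≤ k) :
    (CAN t k v : ℝ) ≤
      (v : ℝ) * ((t : ℝ) - 1) / Real.log ((v : ℝ) ^ (t - 1) / ((v : ℝ) ^ (t - 1) - 1)) *
          Real.log k +
        v * (t * Real.log (2 * v) /
          Real.log ((v : ℝ) ^ (t - 1) / ((v : ℝ) ^ (t - 1) - 1)) + 1) := by
  have : NeZero v := ⟨by omega⟩
  set q : ℝ := (v : ℝ) ^ (t - 1)
  have hq : 1 < q := one_lt_pow₀ (by exact_mod_cast hv) (by omega)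
  set L := Real.log (q / (q - 1))
  have hL : 0 < L := Real.log_pos <| (one_lt_div (by linarith)).2 (by linarith)
  have hp : 1 - q⁻¹ = Real.exp (-L) := by
    rw [Real.exp_neg, Real.exp_log (by positivity)]
    field_simp
  have hk' : (1 : ℝ) ≤ k := by exact_mod_cast hk
  have hv' : (2 : ℝ) ≤ v := by exact_mod_cast hv
  have ht' : (1 : ℝ) ≤ t := by exact_mod_cast (by omega : 1 ≤ t)
  set x := ((t : ℝ) - 1) * Real.log k + t * Real.log (2 * v) with hx_def
  have hx : 0 ≤ x := by
    have := Real.log_nonneg hk'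
    have := Real.log_nonneg (by linarith : (1 : ℝ) ≤ 2 * v)
    nlinarith
  set n := ⌈x / L⌉₊
  have hnL : x ≤ n * L := (div_le_iff₀ hL).1 (Nat.le_ceil _)
  have hcover : (2 * k : ℝ) ^ t * v ^ t * (1 - q⁻¹) ^ n ≤ k := by
    rw [hp, ← Real.exp_nat_mul, ← Real.log_le_log_iff (by positivity) (by positivity),
      Real.log_mul (by positivity) (by positivity), Real.log_mul (by positivity) (by positivity),
      Real.log_pow, Real.log_pow, Real.log_exp, Real.log_mul (by norm_num) (by positivity)]
    rw [hx_def, Real.log_mul (by norm_num) (by positivity)] at hnL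
    linarith
  calc (CAN t k v : ℝ) ≤ v * n := by exact_mod_cast CAN_le_of_mul_pow_le (by omega) hcover
    _ ≤ v * (x / L + 1) := by gcongr; exact (Nat.ceil_lt_add_one (div_nonneg hx hL.le)).le
    _ = _ := by ring

theorem limsup_div_log_le_of_eventually_le {f : ℕ → ℝ} (hf : ∀ k, 0 ≤ f k) {a b : ℝ}
    (h : ∀ᶠ k in atTop, f k ≤ a * Real.log k + b) :
    limsup (fun k => f k / Real.log k) atTop ≤ a := by
  have hlim : Tendsto (fun k : ℕ => a + b / Real.log k) atTop (𝓝 a) := by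
    have := (Real.tendsto_log_atTop.comp tendsto_natCast_atTop_atTop).inv_tendsto_atTop
    simpa [div_eq_mul_inv] using (this.const_mul b).const_add a
  have hle : ∀ᶠ k in atTop, f k / Real.log k ≤ a + b / Real.log k := by
    filter_upwards [h, eventually_gt_atTop 1] with k hk hk1
    have hlog : 0 < Real.log k := Real.log_pos (by exact_mod_cast hk1)
    rw [div_le_iff₀ hlog, add_mul, div_mul_cancel₀ _ hlog.ne']
    linarith
  have hcobdd : IsCoboundedUnder (· ≤ ·) atTop (fun k => f k / Real.log k) :=
    isCoboundedUnder_le_of_le atTop fun k => div_nonneg (hf k) (Real.log_natCast_nonneg k)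
  calc limsup (fun k => f k / Real.log k) atTop
      ≤ limsup (fun k : ℕ => a + b / Real.log k) atTop :=
        limsup_le_limsup hle hcobdd hlim.isBoundedUnder_le
    _ = a := hlim.limsup_eq

theorem cyclic_group_lll_bound (t v : ℕ) (ht : 2 ≤ t) (hv : 2 ≤ v) :
    Filter.limsup (fun k : ℕ => (CAN t k v : ℝ) / Real.log k) Filter.atTop ≤
      (v : ℝ) * ((t : ℝ) - 1) /
        Real.log ((v : ℝ) ^ (t - 1) / ((v : ℝ) ^ (t - 1) - 1)) := by
  refine limsup_div_log_le_of_eventually_le (fun k => Nat.cast_nonneg _)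
    (eventually_atTop.2 ⟨1, fun k hk => CAN_le_mul_log_add ht hv hk⟩)
end

section
/- For all integers t ≥ 2 and v ≥ 2, v·log(v^t/(v^t − 1)) < log(v^{t−1}/(v^{t−1} − 1)); equivalently, (1 − 1/v^t)^v > 1 − 1/v^{t−1}. Consequently v(t−1)/log(v^{t−1}/(v^{t−1} − 1)) < (t−1)/log(v^t/(v^t − 1)), i.e., the group-action bound is strictly tighter than the Godbole–Skipper–Sunley bound. -/
/-! With `y = v^(t-1)` we have `v^t = v * y`, and strict Bernoulli gives
`(1 - 1/(v y))^v > 1 - v/(v y) = 1 - 1/y`. Taking logarithms, and using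
`log (x / (x - 1)) = -log (1 - 1/x)`, this is the first inequality; dividing `t - 1` by the
two positive logarithms turns it into the comparison of the two bounds. -/

open Real

lemma one_sub_one_div_lt_one_sub_one_div_mul_pow {y : ℝ} (hy : 1 < y) {n : ℕ} (hn : 2 ≤ n) :
    1 - 1 / y < (1 - 1 / (n * y)) ^ n := by
  have hn' : (2 : ℝ) ≤ n := by exact_mod_cast hn
  have hny : 1 < (n : ℝ) * y := one_lt_mul_of_le_of_lt (by linarith) hy
  have hbernoulli := one_add_mul_self_lt_rpow_one_add (s := -(1 / (n * y)))
    (by linarith [div_le_one_of_le₀ hny.le (by positivity)])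
    (neg_ne_zero.mpr (by positivity)) (p := n) (by linarith)
  rw [rpow_natCast, ← sub_eq_add_neg] at hbernoulli
  calc 1 - 1 / y = 1 + n * -(1 / (n * y)) := by field_simp; ring
    _ < _ := hbernoulli

lemma log_div_sub_one {x : ℝ} (hx : 1 < x) : log (x / (x - 1)) = -log (1 - 1 / x) := by
  rw [← log_inv]
  congr 1
  field_simp [(by linarith : x - 1 ≠ 0)]

lemma log_div_sub_one_pos {x : ℝ} (hx : 1 < x) : 0 < log (x / (x - 1)) :=
  log_pos (by rw [lt_div_iff₀ (by linarith)]; linarith)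

lemma mul_log_mul_div_sub_one_lt {y : ℝ} (hy : 1 < y) {n : ℕ} (hn : 2 ≤ n) :
    n * log (n * y / (n * y - 1)) < log (y / (y - 1)) := by
  have hny : 1 < (n : ℝ) * y :=
    one_lt_mul_of_le_of_lt (by exact_mod_cast (by omega : 1 ≤ n)) hy
  have hlt := log_lt_log (by rw [sub_pos, div_lt_one] <;> linarith)
    (one_sub_one_div_lt_one_sub_one_div_mul_pow hy hn)
  rw [log_pow] at hlt
  rw [log_div_sub_one hny, log_div_sub_one hy]
  linarith

lemma mul_div_lt_div_of_mul_lt {n a b c : ℝ} (ha : 0 < a) (hb : 0 < b) (hc : 0 < c)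
    (h : n * b < a) : n * c / a < c / b := by
  rw [div_lt_div_iff₀ ha hb]
  nlinarith

theorem group_action_bound_tighter (t v : ℕ) (ht : 2 ≤ t) (hv : 2 ≤ v) :
    (v : ℝ) * Real.log ((v : ℝ) ^ t / ((v : ℝ) ^ t - 1)) <
        Real.log ((v : ℝ) ^ (t - 1) / ((v : ℝ) ^ (t - 1) - 1)) ∧
    (1 - 1 / (v : ℝ) ^ t) ^ v > 1 - 1 / (v : ℝ) ^ (t - 1) ∧
    (v : ℝ) * ((t : ℝ) - 1) /
        Real.log ((v : ℝ) ^ (t - 1) / ((v : ℝ) ^ (t - 1) - 1)) <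
      ((t : ℝ) - 1) / Real.log ((v : ℝ) ^ t / ((v : ℝ) ^ t - 1)) := by
  have hpow : (v : ℝ) ^ t = v * (v : ℝ) ^ (t - 1) := by
    rw [← pow_succ']; congr 1; omega
  have hv' : (1 : ℝ) < v := by exact_mod_cast hv
  have hy : 1 < (v : ℝ) ^ (t - 1) := one_lt_pow₀ hv' (by omega)
  have hx : 1 < (v : ℝ) * (v : ℝ) ^ (t - 1) := one_lt_mul_of_le_of_lt hv'.le hy
  have ht' : (0 : ℝ) < t - 1 := by
    rw [sub_pos]; exact_mod_cast (by omega : 1 < t)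
  have hlog := mul_log_mul_div_sub_one_lt hy hv
  rw [hpow]
  refine ⟨hlog, one_sub_one_div_lt_one_sub_one_div_mul_pow hy hv, ?_⟩
  exact mul_div_lt_div_of_mul_lt (log_div_sub_one_pos hy) (log_div_sub_one_pos hx) ht' hlog
end
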